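/- arXiv:0811.3227 — 6 statements merged into one kernel-verified Lean document; each statement's English description precedes it below -/
import Mathlib

section
/- Let (X,d) be a compact metric space, f : X → X a continuous surjective map, ε > 0, and φ : X → ℝ continuous. If Y = ⋃_{j∈J} Y_j is a finite or countable union of subsets of X, then P⁻_f(φ, Y, ε) = sup_{j∈J} P⁻_f(φ, Y_j, ε) and P⁻_f(φ, Y) = sup_{j∈J} P⁻_f(φ, Y_j). -/
open Filter Set Function
open scoped ENNReal NNReal BigOperators

variable {X : Type*} [MetricSpace X]

/-- A finite prehistory (branch of consecutive preimages) for `f`: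
`pts 0` is the base point and `pts (i+1)` is a preimage of `pts i` for `i < len`. -/
structure Prehistory (f : X → X) where
  len : ℕ
  pts : ℕ → X
  isPre : ∀ i < len, f (pts (i + 1)) = pts i

namespace Prehistory

variable {f : X → X}

/-- The set `X(C, ε)` of points `ε`-shadowed (in backward time) by the prehistory `C`. -/
def shadow (C : Prehistory f) (ε : ℝ) : Set X :=
  {z | ∃ zs : ℕ → X, zs 0 = z ∧ (∀ i < C.len, f (zs (i + 1)) = zs i) ∧
    ∀ i ≤ C.len, dist (zs i) (C.pts i) < ε}

/-- The consecutive sum `S⁻_{n(C)} φ (C) = φ(y) + φ(y₋₁) + ⋯ + φ(y₋ₘ)`. -/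
noncomputable def consSum (C : Prehistory f) (φ : X → ℝ) : ℝ :=
  ∑ i ∈ Finset.range (C.len + 1), φ (C.pts i)

end Prehistory

/-- `Γ` `ε`-covers `Y` if `Y ⊆ ⋃_{C ∈ Γ} X(C, ε)`. -/
def ECovers {f : X → X} (Γ : Set (Prehistory f)) (Y : Set X) (ε : ℝ) : Prop :=
  Y ⊆ ⋃ C ∈ Γ, C.shadow ε

/-- `M⁻_f(λ, φ, Y, N, ε)`. -/
noncomputable def invM (f : X → X) (lam : ℝ) (φ : X → ℝ) (Y : Set X) (N : ℕ) (ε : ℝ) :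
    ℝ≥0∞ :=
  ⨅ (Γ : Set (Prehistory f)) (_ : ECovers Γ Y ε ∧ ∀ C ∈ Γ, N ≤ C.len),
    ∑' C : Γ, ENNReal.ofReal (Real.exp (-lam * (C.1.len : ℝ) + C.1.consSum φ))

/-- `M⁻_f(λ, φ, Y, ε) = lim_{N → ∞} M⁻_f(λ, φ, Y, N, ε)`; the quantity is nondecreasing
in `N`, so the limit is the supremum. -/
noncomputable def invMLim (f : X → X) (lam : ℝ) (φ : X → ℝ) (Y : Set X) (ε : ℝ) : ℝ≥0∞ :=
  ⨆ N : ℕ, invM f lam φ Y N ε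

/-- The `ε`-inverse pressure `P⁻_f(φ, Y, ε) = inf {λ : M⁻_f(λ, φ, Y, ε) = 0}`. -/
noncomputable def invPressEps (f : X → X) (φ : X → ℝ) (Y : Set X) (ε : ℝ) : EReal :=
  sInf {l : EReal | ∃ lam : ℝ, l = (lam : EReal) ∧ invMLim f lam φ Y ε = 0}

/-- The inverse pressure `P⁻_f(φ, Y) = lim_{ε → 0} P⁻_f(φ, Y, ε)`; the `ε`-inverse
pressure is nonincreasing in `ε`, so the limit is the supremum over `ε > 0`. -/
noncomputable def invPress (f : X → X) (φ : X → ℝ) (Y : Set X) : EReal :=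
  ⨆ (ε : ℝ) (_ : 0 < ε), invPressEps f φ Y ε

/-
Covers of the pieces `Y j` of weights `δ_j`, with `∑ δ_j` arbitrarily small, combine into a
cover of `⋃ j, Y j`, so `M⁻_f(λ, φ, ·, N, ε) = 0` is stable under countable unions; hence so
is `M⁻_f(λ, φ, ·, ε) = 0`, and every `λ` above all the `P⁻_f(φ, Y j, ε)` is admissible for the
union. Taking suprema over `ε > 0` gives the statement for `P⁻_f`.
-/

section InversePressure

variable {f : X → X} {lam lam' : ℝ} {φ : X → ℝ} {Y Y' : Set X} {N : ℕ} {ε : ℝ}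

lemma invM_mono (h : Y ⊆ Y') : invM f lam φ Y N ε ≤ invM f lam φ Y' N ε :=
  le_iInf₂ fun Γ hΓ => iInf₂_le Γ ⟨h.trans hΓ.1, hΓ.2⟩

lemma invMLim_mono (h : Y ⊆ Y') : invMLim f lam φ Y ε ≤ invMLim f lam φ Y' ε :=
  iSup_mono fun _ => invM_mono h

lemma invM_anti_lam (h : lam' ≤ lam) : invM f lam φ Y N ε ≤ invM f lam' φ Y N ε := by
  refine le_iInf₂ fun Γ hΓ => (iInf₂_le Γ hΓ).trans (ENNReal.tsum_le_tsum fun C => ?_)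
  gcongr

lemma invMLim_anti_lam (h : lam' ≤ lam) : invMLim f lam φ Y ε ≤ invMLim f lam' φ Y ε :=
  iSup_mono fun _ => invM_anti_lam h

lemma invPressEps_mono (h : Y ⊆ Y') : invPressEps f φ Y ε ≤ invPressEps f φ Y' ε := by
  exact sInf_le_sInf fun _ ⟨lam, hl, h0⟩ =>
    ⟨lam, hl, nonpos_iff_eq_zero.1 (h0 ▸ invMLim_mono h)⟩

lemma invPressEps_le_of_invMLim_eq_zero (h : invMLim f lam φ Y ε = 0) :
    invPressEps f φ Y ε ≤ lam :=
  sInf_le ⟨lam, rfl, h⟩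

lemma invMLim_eq_zero_of_invPressEps_lt (h : invPressEps f φ Y ε < lam) :
    invMLim f lam φ Y ε = 0 := by
  obtain ⟨_, ⟨mu, rfl, hmu⟩, hmu_lt⟩ := sInf_lt_iff.1 h
  exact nonpos_iff_eq_zero.1 (hmu ▸ invMLim_anti_lam (EReal.coe_lt_coe_iff.1 hmu_lt).le)

lemma exists_cover_tsum_lt {t : ℝ≥0∞} (h : invM f lam φ Y N ε < t) :
    ∃ Γ : Set (Prehistory f), (ECovers Γ Y ε ∧ ∀ C ∈ Γ, N ≤ C.len) ∧
      ∑' C : Γ, ENNReal.ofReal (Real.exp (-lam * (C.1.len : ℝ) + C.1.consSum φ)) < t := by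
  simpa only [invM, iInf_lt_iff, exists_prop] using h

lemma invM_iUnion_eq_zero {J : Type*} [Countable J] {Y : J → Set X}
    (h : ∀ j, invM f lam φ (Y j) N ε = 0) : invM f lam φ (⋃ j, Y j) N ε = 0 := by
  refine nonpos_iff_eq_zero.1 (ENNReal.le_of_forall_pos_le_add fun δ hδ _ => ?_)
  obtain ⟨δs, hδs_pos, hδs_sum⟩ := ENNReal.exists_pos_sum_of_countable
    (ENNReal.coe_ne_zero.2 hδ.ne') J
  have hcovers := fun j =>
    exists_cover_tsum_lt (t := δs j) ((h j).trans_lt <| ENNReal.coe_pos.2 (hδs_pos j))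
  choose Γ hΓ hΓ_lt using hcovers
  have hcover : ECovers (⋃ j, Γ j) (⋃ j, Y j) ε := by
    refine iUnion_subset fun j => (hΓ j).1.trans <| iUnion₂_subset fun C hC => ?_
    exact subset_biUnion_of_mem (u := fun C => C.shadow ε) (mem_iUnion_of_mem j hC)
  have hlen : ∀ C ∈ ⋃ j, Γ j, N ≤ C.len := by
    simp only [mem_iUnion]
    exact fun C ⟨j, hC⟩ => (hΓ j).2 C hC
  calc invM f lam φ (⋃ j, Y j) N ε
      ≤ ∑' C : (⋃ j, Γ j : Set (Prehistory f)),
          ENNReal.ofReal (Real.exp (-lam * (C.1.len : ℝ) + C.1.consSum φ)) :=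
        iInf₂_le _ ⟨hcover, hlen⟩
    _ ≤ ∑' j, ∑' C : Γ j,
          ENNReal.ofReal (Real.exp (-lam * (C.1.len : ℝ) + C.1.consSum φ)) :=
        ENNReal.tsum_iUnion_le_tsum
          (fun C => ENNReal.ofReal (Real.exp (-lam * (C.len : ℝ) + C.consSum φ))) Γ
    _ ≤ ∑' j, (δs j : ℝ≥0∞) := ENNReal.tsum_le_tsum fun j => (hΓ_lt j).le
    _ ≤ 0 + δ := by rw [zero_add]; exact hδs_sum.le

lemma invMLim_iUnion_eq_zero {J : Type*} [Countable J] {Y : J → Set X}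
    (h : ∀ j, invMLim f lam φ (Y j) ε = 0) : invMLim f lam φ (⋃ j, Y j) ε = 0 := by
  simp only [invMLim, ENNReal.iSup_eq_zero] at h ⊢
  exact fun N => invM_iUnion_eq_zero fun j => h j N

lemma invPressEps_iUnion {J : Type*} [Countable J] (Y : J → Set X) :
    invPressEps f φ (⋃ j, Y j) ε = ⨆ j, invPressEps f φ (Y j) ε := by
  refine le_antisymm ?_ (iSup_le fun j => invPressEps_mono (subset_iUnion Y j))
  refine EReal.le_of_forall_lt_iff_le.1 fun c hc => invPressEps_le_of_invMLim_eq_zero ?_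
  exact invMLim_iUnion_eq_zero fun j =>
    invMLim_eq_zero_of_invPressEps_lt ((le_iSup (fun j => invPressEps f φ (Y j) ε) j).trans_lt hc)

lemma invPress_iUnion {J : Type*} [Countable J] (Y : J → Set X) :
    invPress f φ (⋃ j, Y j) = ⨆ j, invPress f φ (Y j) := by
  simp only [invPress, invPressEps_iUnion]
  rw [iSup_comm]
  exact iSup_congr fun ε => iSup_comm

end InversePressure

theorem stmt1_general (f : X → X) (ε : ℝ) (φ : X → ℝ) (J : Type*) [Countable J] (Y : J → Set X) :
    invPressEps f φ (⋃ j, Y j) ε = ⨆ j, invPressEps f φ (Y j) ε ∧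
      invPress f φ (⋃ j, Y j) = ⨆ j, invPress f φ (Y j) :=
  ⟨invPressEps_iUnion Y, invPress_iUnion Y⟩

theorem stmt1 [CompactSpace X] (f : X → X) (hf : Continuous f) (hfs : Surjective f)
    (ε : ℝ) (hε : 0 < ε) (φ : X → ℝ) (hφ : Continuous φ)
    (J : Type*) [Countable J] (Y : J → Set X) :
    invPressEps f φ (⋃ j, Y j) ε = ⨆ j, invPressEps f φ (Y j) ε ∧
      invPress f φ (⋃ j, Y j) = ⨆ j, invPress f φ (Y j) :=
  stmt1_general f ε φ J Y
end

section
/- Let (X,d) be a compact metric space and f : X → X a homeomorphism. Then for every continuous φ : X → ℝ, the inverse pressure equals the classical topological pressure: P⁻_f(φ, X) = P_f(φ). -/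
/-!
For a homeomorphism a prehistory is determined by its base point: `X(C, ε)` is the Bowen ball of
`f⁻¹` of length `n(C) + 1` and `S⁻φ(C)` is the Birkhoff sum of `f⁻¹` along it. Reversing orbit
segments shows that `f` and `f⁻¹` have the same separated sums, so both pressures can be computed
for `f⁻¹`.

`P⁻ ≤ P`: the backward orbits through a maximal `(n + 1, ε / 2)`-separated set of `f⁻¹` form an
admissible `ε`-cover whose weight is `e^{-λ n}` times a separated sum, which decays once `λ`
exceeds the growth rate of the separated sums.

`P ≤ P⁻`: when `M⁻(λ, ε) = 0`, compactness gives a finite admissible cover of weight at most one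
by Bowen balls of lengths `> N`. Splitting an `(n, 2ε)`-separated set along this cover, a ball at
least as long as `n` contains at most one of its points, and a shorter ball of length `m + 1`
leaves, after `m + 1` steps of `f⁻¹`, a separated set of length `n - m - 1`. Induction on `n` bounds
the separated sums by `exp ((λ + δ + |λ| / (N + 1)) n + const)`, where `δ` is the oscillation of
`φ` on `ε`-balls.
-/

open Filter Set Function
open scoped ENNReal NNReal BigOperators

variable {X : Type*} [MetricSpace X]

/-- The `n`-th Birkhoff sum `S_n φ (x) = φ(x) + φ(f x) + ⋯ + φ(f^{n-1} x)`. -/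
noncomputable def birkhoff (f : X → X) (φ : X → ℝ) (n : ℕ) (x : X) : ℝ :=
  ∑ i ∈ Finset.range n, φ (f^[i] x)

/-- `E` is an `(n, ε)`-separated set for `f`. -/
def IsSeparatedSet (f : X → X) (n : ℕ) (ε : ℝ) (E : Finset X) : Prop :=
  ∀ x ∈ E, ∀ y ∈ E, x ≠ y → ∃ j < n, ε < dist (f^[j] x) (f^[j] y)

/-- The supremum of `Σ_{x ∈ E} exp (S_n φ (x))` over `(n, ε)`-separated sets `E`. -/
noncomputable def sepSum (f : X → X) (φ : X → ℝ) (n : ℕ) (ε : ℝ) : ℝ≥0∞ :=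
  ⨆ (E : Finset X) (_ : IsSeparatedSet f n ε E),
    ∑ x ∈ E, ENNReal.ofReal (Real.exp (birkhoff f φ n x))

/-- The classical (forward) topological pressure
`P_f(φ) = lim_{ε → 0} limsup_{n → ∞} (1/n) log sup {Σ_{x ∈ E} exp (S_n φ x)}`;
the inner quantity is nonincreasing in `ε`, so the limit is the supremum over `ε > 0`. -/
noncomputable def topPress (f : X → X) (φ : X → ℝ) : EReal :=
  ⨆ (ε : ℝ) (_ : 0 < ε),
    Filter.limsup (fun n : ℕ => (((n : ℝ)⁻¹ : ℝ) : EReal) * ENNReal.log (sepSum f φ n ε))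
      Filter.atTop

def bowenBall (g : X → X) (y : X) (n : ℕ) (ε : ℝ) : Set X :=
  {x | ∀ i < n, dist (g^[i] x) (g^[i] y) < ε}

section BowenBall

variable {g : X → X}

lemma isOpen_bowenBall (hg : Continuous g) (y : X) (n : ℕ) (ε : ℝ) :
    IsOpen (bowenBall g y n ε) := by
  have : bowenBall g y n ε = ⋂ i ∈ Iio n, g^[i] ⁻¹' Metric.ball (g^[i] y) ε := by
    ext; simp [bowenBall]
  rw [this]
  exact (finite_Iio n).isOpen_biInter fun i _ => Metric.isOpen_ball.preimage (hg.iterate i)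

lemma mem_bowenBall_self {y : X} {n : ℕ} {ε : ℝ} (hε : 0 < ε) : y ∈ bowenBall g y n ε :=
  fun i _ => by simpa using hε

end BowenBall

namespace IsSeparatedSet

variable {g : X → X} {n : ℕ} {ε : ℝ} {E : Finset X}

lemma mono {ε' : ℝ} (hE : IsSeparatedSet g n ε' E) (h : ε ≤ ε') : IsSeparatedSet g n ε E :=
  fun x hx y hy hxy => (hE x hx y hy hxy).imp fun _ ⟨hj, hd⟩ => ⟨hj, h.trans_lt hd⟩

lemma insert [DecidableEq X] (hE : IsSeparatedSet g n ε E) {x : X}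
    (hx : ∀ y ∈ E, ∃ j < n, ε < dist (g^[j] x) (g^[j] y)) :
    IsSeparatedSet g n ε (insert x E) := by
  intro a ha b hb hab
  rcases Finset.mem_insert.1 ha with rfl | haE <;> rcases Finset.mem_insert.1 hb with rfl | hbE
  · exact absurd rfl hab
  · exact hx b hbE
  · simpa only [dist_comm] using hx a haE
  · exact hE a haE b hbE hab

lemma exists_le_of_mem_bowenBall (hE : IsSeparatedSet g n (2 * ε) E) {a b y : X} {m : ℕ}
    (ha : a ∈ E) (hb : b ∈ E) (hab : a ≠ b) (ha' : a ∈ bowenBall g y m ε)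
    (hb' : b ∈ bowenBall g y m ε) : ∃ j < n, m ≤ j ∧ 2 * ε < dist (g^[j] a) (g^[j] b) := by
  obtain ⟨j, hjn, hj⟩ := hE a ha b hb hab
  refine ⟨j, hjn, not_lt.1 fun hjm => hj.not_ge ?_, hj⟩
  calc dist (g^[j] a) (g^[j] b) ≤ dist (g^[j] a) (g^[j] y) + dist (g^[j] b) (g^[j] y) :=
        dist_triangle_right _ _ _
    _ ≤ 2 * ε := by linarith [ha' j hjm, hb' j hjm]

end IsSeparatedSet

section Compact

variable [CompactSpace X]

lemma IsSeparatedSet.exists_card_le {g : X → X} (hg : Continuous g) (n : ℕ) {ε : ℝ}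
    (hε : 0 < ε) : ∃ B : ℕ, ∀ E, IsSeparatedSet g n ε E → E.card ≤ B := by
  obtain ⟨T, hT⟩ := isCompact_univ.elim_finite_subcover (fun t => bowenBall g t n (ε / 2))
    (fun t => isOpen_bowenBall hg t n _)
    fun x _ => mem_iUnion.2 ⟨x, mem_bowenBall_self (half_pos hε)⟩
  choose t htT hxt using fun x => mem_iUnion₂.1 (hT (mem_univ x))
  refine ⟨T.card, fun E hE => Finset.card_le_card_of_injOn t (fun x _ => htT x) ?_⟩
  intro a ha b hb hab
  by_contra hne
  obtain ⟨j, hj, hd⟩ := hE a ha b hb hne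
  have hb' := hxt b j hj
  rw [← hab] at hb'
  linarith [dist_triangle_right (g^[j] a) (g^[j] b) (g^[j] (t a)), hxt a j hj]

lemma exists_isSeparatedSet_forall_exists_dist_le {g : X → X} (hg : Continuous g) (n : ℕ)
    {ε : ℝ} (hε : 0 < ε) : ∃ E, IsSeparatedSet g n ε E ∧
      ∀ x, ∃ y ∈ E, ∀ j < n, dist (g^[j] x) (g^[j] y) ≤ ε := by
  classical
  obtain ⟨B, hB⟩ := IsSeparatedSet.exists_card_le hg n hε
  by_contra! hext
  have hlarge : ∀ k : ℕ, ∃ E, IsSeparatedSet g n ε E ∧ k ≤ E.card := by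
    intro k
    induction k with
    | zero => exact ⟨∅, by simp [IsSeparatedSet], le_rfl⟩
    | succ k ih =>
      obtain ⟨E, hE, hk⟩ := ih
      obtain ⟨x, hx⟩ := hext E hE
      have hxE : x ∉ E := fun hxE => by
        obtain ⟨j, -, h⟩ := hx x hxE
        rw [dist_self] at h
        linarith
      exact ⟨_, hE.insert hx, by rw [Finset.card_insert_of_notMem hxE]; omega⟩
  obtain ⟨E, hE, hcard⟩ := hlarge (B + 1)
  exact absurd (hB E hE) (by omega)

end Compact

lemma Equiv.symm_iterate_iterate {α : Type*} (f : α ≃ α) {i m : ℕ} (h : i ≤ m) (x : α) :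
    f.symm^[i] (f^[m] x) = f^[m - i] x := by
  obtain ⟨k, rfl⟩ := Nat.exists_eq_add_of_le h
  rw [iterate_add_apply, f.leftInverse_symm.iterate i, Nat.add_sub_cancel_left]

lemma birkhoff_symm_iterate {α : Type*} (f : α ≃ α) (φ : α → ℝ) (n : ℕ) (x : α) :
    birkhoff f.symm φ n (f^[n - 1] x) = birkhoff f φ n x := by
  unfold birkhoff
  rw [← Finset.sum_range_reflect]
  refine Finset.sum_congr rfl fun i hi => ?_
  rw [f.symm_iterate_iterate (by simp at hi; omega)]
  congr 2
  simp at hi; omega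

lemma IsSeparatedSet.image_iterate {f : X ≃ X} {n : ℕ} {ε : ℝ} {E : Finset X} [DecidableEq X]
    (hE : IsSeparatedSet f n ε E) : IsSeparatedSet f.symm n ε (E.image f^[n - 1]) := by
  simp only [IsSeparatedSet, Finset.forall_mem_image]
  intro x hx y hy hxy
  obtain ⟨j, hj, hd⟩ := hE x hx y hy (ne_of_apply_ne _ hxy)
  refine ⟨n - 1 - j, by omega, ?_⟩
  rwa [f.symm_iterate_iterate (by omega), f.symm_iterate_iterate (by omega),
    show n - 1 - (n - 1 - j) = j by omega]

section Reversal

variable (f : X ≃ X) (φ : X → ℝ)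

lemma sepSum_le_sepSum_symm (n : ℕ) (ε : ℝ) : sepSum f φ n ε ≤ sepSum f.symm φ n ε := by
  classical
  refine iSup₂_le fun E hE => le_iSup₂_of_le _ hE.image_iterate (le_of_eq ?_)
  rw [Finset.sum_image fun x _ y _ h => (f.injective.iterate _) h]
  simp only [birkhoff_symm_iterate]

lemma sepSum_symm (n : ℕ) (ε : ℝ) : sepSum f.symm φ n ε = sepSum f φ n ε :=
  le_antisymm (by simpa using sepSum_le_sepSum_symm f.symm φ n ε) (sepSum_le_sepSum_symm f φ n ε)

end Reversal

lemma Equiv.eq_symm_iterate_of_apply_succ_eq {α : Type*} (f : α ≃ α) {zs : ℕ → α} {m : ℕ}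
    (h : ∀ i < m, f (zs (i + 1)) = zs i) : ∀ i ≤ m, zs i = f.symm^[i] (zs 0) := by
  intro i hi
  induction i with
  | zero => rfl
  | succ i ih =>
    rw [iterate_succ_apply', ← ih (by omega), ← h i (by omega), f.symm_apply_apply]

namespace Prehistory

variable {α : Type*} (f : α ≃ α)

def backwardOrbit (y : α) (m : ℕ) : Prehistory f :=
  ⟨m, fun i => f.symm^[i] y, fun i _ => by
    rw [iterate_succ_apply']; exact f.apply_symm_apply _⟩

lemma consSum_eq_birkhoff (C : Prehistory f) (φ : α → ℝ) :
    C.consSum φ = birkhoff f.symm φ (C.len + 1) (C.pts 0) :=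
  Finset.sum_congr rfl fun i hi => by
    rw [f.eq_symm_iterate_of_apply_succ_eq C.isPre i (by simp at hi; omega)]

end Prehistory

lemma Prehistory.shadow_eq_bowenBall (f : X ≃ X) (C : Prehistory f) (ε : ℝ) :
    C.shadow ε = bowenBall f.symm (C.pts 0) (C.len + 1) ε := by
  ext z
  constructor
  · rintro ⟨zs, rfl, hzs, hdist⟩ i hi
    rw [← f.eq_symm_iterate_of_apply_succ_eq hzs i (by omega),
      ← f.eq_symm_iterate_of_apply_succ_eq C.isPre i (by omega)]
    exact hdist i (by omega)
  · intro hz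
    refine ⟨fun i => f.symm^[i] z, rfl, (backwardOrbit f z C.len).isPre, fun i hi => ?_⟩
    rw [f.eq_symm_iterate_of_apply_succ_eq C.isPre i hi]
    exact hz i (by omega)

open ExpGrowth in
lemma topPress_eq_iSup_expGrowthSup (f : X → X) (φ : X → ℝ) :
    topPress f φ = ⨆ (ε : ℝ) (_ : 0 < ε), expGrowthSup (fun n => sepSum f φ n ε) := by
  simp only [topPress, expGrowthSup, EReal.coe_inv, div_eq_mul_inv, mul_comm (ENNReal.log _)]
  rfl

lemma Finset.sum_le_sum_sum_filter_of_forall_exists {ι α : Type*} {s : Finset α} {t : Finset ι}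
    {P : ι → α → Prop} [∀ i, DecidablePred (P i)] {F : α → ℝ} (hF : ∀ x ∈ s, 0 ≤ F x)
    (h : ∀ x ∈ s, ∃ i ∈ t, P i x) : ∑ x ∈ s, F x ≤ ∑ i ∈ t, ∑ x ∈ s with P i x, F x := by
  calc ∑ x ∈ s, F x ≤ ∑ x ∈ s, ∑ i ∈ t with P i x, F x := Finset.sum_le_sum fun x hx => by
        obtain ⟨i, hi, hP⟩ := h x hx
        exact Finset.single_le_sum (f := fun _ => F x) (fun _ _ => hF x hx)
          (Finset.mem_filter.2 ⟨hi, hP⟩)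
    _ = ∑ i ∈ t, ∑ x ∈ s with P i x, F x := by
        simp only [Finset.sum_filter]
        exact Finset.sum_comm

lemma birkhoff_add {α : Type*} (g : α → α) (φ : α → ℝ) (m n : ℕ) (x : α) :
    birkhoff g φ (m + n) x = birkhoff g φ m x + birkhoff g φ n (g^[m] x) :=
  birkhoffSum_add g φ m n x

lemma abs_birkhoff_le {α : Type*} {g : α → α} {φ : α → ℝ} {K : ℝ} (hK : ∀ x, |φ x| ≤ K)
    (n : ℕ) (x : α) : |birkhoff g φ n x| ≤ n * K := by
  calc |birkhoff g φ n x| ≤ ∑ i ∈ Finset.range n, |φ (g^[i] x)| := Finset.abs_sum_le_sum_abs _ _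
    _ ≤ ∑ i ∈ Finset.range n, K := Finset.sum_le_sum fun i _ => hK _
    _ = n * K := by simp

section Cover

open Real

variable {g : X → X} {φ : X → ℝ} {ε δ K lam : ℝ}

lemma birkhoff_le_add_of_mem_bowenBall (hφ : ∀ {x y}, dist x y < ε → dist (φ x) (φ y) < δ)
    {n : ℕ} {x y : X} (hx : x ∈ bowenBall g y n ε) :
    birkhoff g φ n x ≤ birkhoff g φ n y + n * δ := by
  calc birkhoff g φ n x ≤ ∑ i ∈ Finset.range n, (φ (g^[i] y) + δ) :=
        Finset.sum_le_sum fun i hi => by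
          have h := hφ (hx i (Finset.mem_range.1 hi))
          rw [Real.dist_eq] at h
          linarith [le_abs_self (φ (g^[i] x) - φ (g^[i] y))]
    _ = birkhoff g φ n y + n * δ := by simp [Finset.sum_add_distrib, birkhoff]

open scoped Classical in
lemma sum_exp_birkhoff_filter_le_of_le (hK : ∀ x, |φ x| ≤ K) {n m M : ℕ} {E : Finset X}
    {y : X} (hE : IsSeparatedSet g n (2 * ε) E) (hn : n ≤ m + 1) (hm : m ≤ M) :
    ∑ x ∈ E with x ∈ bowenBall g y (m + 1) ε, exp (birkhoff g φ n x) ≤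
      exp (-lam * m + birkhoff g φ (m + 1) y) * exp (lam * n + 2 * (M + 1) * (K + |lam|)) := by
  have : Nonempty X := ⟨y⟩
  obtain ⟨a, ha⟩ : ∃ a, {x ∈ E | x ∈ bowenBall g y (m + 1) ε} ⊆ {a} := by
    refine Finset.card_le_one_iff_subset_singleton.1 (Finset.card_le_one.2 fun a ha b hb => ?_)
    rw [Finset.mem_filter] at ha hb
    by_contra hab
    obtain ⟨j, hjn, hjm, -⟩ := hE.exists_le_of_mem_bowenBall ha.1 hb.1 hab ha.2 hb.2
    omega
  refine (Finset.sum_le_sum_of_subset_of_nonneg ha fun _ _ _ => (exp_pos _).le).trans ?_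
  rw [Finset.sum_singleton, ← exp_add, exp_le_exp]
  have hK0 : 0 ≤ K := (abs_nonneg _).trans (hK a)
  have hn' : (n : ℝ) ≤ M + 1 := by exact_mod_cast hn.trans (by omega)
  have hm' : (m : ℝ) ≤ M := by exact_mod_cast hm
  have hSa := (le_abs_self _).trans (abs_birkhoff_le (g := g) hK n a)
  have hSy := neg_le_of_abs_le (abs_birkhoff_le (g := g) hK (m + 1) y)
  have hlm : lam * m ≤ |lam| * M :=
    (mul_le_mul_of_nonneg_right (le_abs_self lam) m.cast_nonneg).trans
      (mul_le_mul_of_nonneg_left hm' (abs_nonneg lam))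
  have hln : -(|lam| * (M + 1)) ≤ lam * n := by
    have := mul_le_mul_of_nonneg_right (neg_abs_le lam) n.cast_nonneg
    nlinarith [abs_nonneg lam]
  have hnK := mul_le_mul_of_nonneg_right hn' hK0
  have hmK := mul_le_mul_of_nonneg_right (add_le_add_right hm' 1) hK0
  push_cast at hSy
  linarith [abs_nonneg lam]

open scoped Classical in
lemma sum_exp_birkhoff_filter_le_of_forall (hφ : ∀ {x y}, dist x y < ε → dist (φ x) (φ y) < δ)
    {m k : ℕ} {E : Finset X} {y : X} (hE : IsSeparatedSet g (m + 1 + k) (2 * ε) E) {B : ℝ}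
    (hB : ∀ E', IsSeparatedSet g k (2 * ε) E' → ∑ u ∈ E', exp (birkhoff g φ k u) ≤ B) :
    ∑ x ∈ E with x ∈ bowenBall g y (m + 1) ε, exp (birkhoff g φ (m + 1 + k) x) ≤
      exp (birkhoff g φ (m + 1) y + (m + 1) * δ) * B := by
  set F := {x ∈ E | x ∈ bowenBall g y (m + 1) ε}
  have hsep : ∀ a ∈ F, ∀ b ∈ F, a ≠ b →
      ∃ j < k, 2 * ε < dist (g^[j] (g^[m + 1] a)) (g^[j] (g^[m + 1] b)) := by
    intro a ha b hb hab
    rw [Finset.mem_filter] at ha hb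
    obtain ⟨j, hjn, hjm, hj⟩ := hE.exists_le_of_mem_bowenBall ha.1 hb.1 hab ha.2 hb.2
    refine ⟨j - (m + 1), by omega, ?_⟩
    rwa [← iterate_add_apply, ← iterate_add_apply, Nat.sub_add_cancel hjm]
  have hinj : Set.InjOn g^[m + 1] F := fun a ha b hb hab => by
    by_contra hne
    obtain ⟨j, -, hj⟩ := hsep a ha b hb hne
    have hε := (dist_nonneg.trans_lt ((Finset.mem_filter.1 ha).2 0 (by omega)))
    rw [hab, dist_self] at hj
    linarith
  have hF : IsSeparatedSet g k (2 * ε) (F.image g^[m + 1]) := by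
    simp only [IsSeparatedSet, Finset.forall_mem_image]
    exact fun a ha b hb hab => hsep a ha b hb (ne_of_apply_ne _ hab)
  calc ∑ x ∈ F, exp (birkhoff g φ (m + 1 + k) x)
      ≤ ∑ x ∈ F, exp (birkhoff g φ (m + 1) y + (m + 1) * δ) *
          exp (birkhoff g φ k (g^[m + 1] x)) := by
        refine Finset.sum_le_sum fun x hx => ?_
        rw [birkhoff_add, exp_add]
        gcongr
        exact_mod_cast birkhoff_le_add_of_mem_bowenBall hφ (Finset.mem_filter.1 hx).2
    _ = exp (birkhoff g φ (m + 1) y + (m + 1) * δ) *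
          ∑ u ∈ F.image g^[m + 1], exp (birkhoff g φ k u) := by
        rw [Finset.sum_image hinj, Finset.mul_sum]
    _ ≤ exp (birkhoff g φ (m + 1) y + (m + 1) * δ) * B := by
        gcongr
        exact hB _ hF

/-- The term `|λ| / (N + 1)` of the rate pays, in the inductive step, for the weight `exp (-λ m)`
discounting only `m` of the `m + 1` steps of a Bowen ball. -/
lemma sum_exp_birkhoff_le_of_cover (hφ : ∀ {x y}, dist x y < ε → dist (φ x) (φ y) < δ)
    (hδ : 0 ≤ δ) (hK : ∀ x, |φ x| ≤ K) {ι : Type*} {Γ : Finset ι} {y : ι → X} {m : ι → ℕ}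
    {N M : ℕ} (hcov : ∀ x, ∃ p ∈ Γ, x ∈ bowenBall g (y p) (m p + 1) ε)
    (hN : ∀ p ∈ Γ, N ≤ m p) (hM : ∀ p ∈ Γ, m p ≤ M)
    (hw : ∑ p ∈ Γ, exp (-lam * m p + birkhoff g φ (m p + 1) (y p)) ≤ 1)
    (n : ℕ) (E : Finset X) (hE : IsSeparatedSet g n (2 * ε) E) :
    ∑ x ∈ E, exp (birkhoff g φ n x) ≤
      exp ((lam + δ + |lam| / (N + 1)) * n + 2 * (M + 1) * (K + |lam|)) := by
  classical
  set r := lam + δ + |lam| / (N + 1)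
  set D := 2 * (M + 1) * (K + |lam|)
  induction n using Nat.strong_induction_on generalizing E with
  | _ n ih =>
  have hfibre : ∀ p ∈ Γ, ∑ x ∈ E with x ∈ bowenBall g (y p) (m p + 1) ε,
      exp (birkhoff g φ n x) ≤ exp (-lam * m p + birkhoff g φ (m p + 1) (y p)) * exp (r * n + D) := by
    intro p hp
    rcases le_or_gt n (m p + 1) with hn | hn
    · refine (sum_exp_birkhoff_filter_le_of_le (lam := lam) hK hE hn (hM p hp)).trans ?_
      gcongr
      have : 0 ≤ δ + |lam| / (N + 1) := by positivity
      nlinarith [n.cast_nonneg (α := ℝ)]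
    · obtain ⟨k, rfl⟩ := Nat.exists_eq_add_of_le hn.le
      refine (sum_exp_birkhoff_filter_le_of_forall hφ hE (ih k (by omega))).trans ?_
      rw [← exp_add, ← exp_add, exp_le_exp]
      have hmN : (N : ℝ) + 1 ≤ m p + 1 := by exact_mod_cast Nat.succ_le_succ (hN p hp)
      have : |lam| ≤ (m p + 1) * (|lam| / (N + 1)) := by
        rw [mul_div_assoc', le_div_iff₀ (by positivity)]
        nlinarith [abs_nonneg lam]
      push_cast
      nlinarith [neg_abs_le lam]
  calc ∑ x ∈ E, exp (birkhoff g φ n x)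
      ≤ ∑ p ∈ Γ, ∑ x ∈ E with x ∈ bowenBall g (y p) (m p + 1) ε, exp (birkhoff g φ n x) :=
        Finset.sum_le_sum_sum_filter_of_forall_exists (fun _ _ => (exp_pos _).le)
          fun x _ => hcov x
    _ ≤ ∑ p ∈ Γ, exp (-lam * m p + birkhoff g φ (m p + 1) (y p)) * exp (r * n + D) :=
        Finset.sum_le_sum hfibre
    _ ≤ exp (r * n + D) := by
        rw [← Finset.sum_mul]
        exact mul_le_of_le_one_left (exp_pos _).le hw

end Cover

open Real in
lemma sepSum_le_ofReal {g : X → X} {φ : X → ℝ} {n : ℕ} {ε B : ℝ}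
    (h : ∀ E, IsSeparatedSet g n ε E → ∑ x ∈ E, exp (birkhoff g φ n x) ≤ B) :
    sepSum g φ n ε ≤ ENNReal.ofReal B :=
  iSup₂_le fun E hE => by
    rw [← ENNReal.ofReal_sum_of_nonneg fun _ _ => (exp_pos _).le]
    exact ENNReal.ofReal_le_ofReal (h E hE)

open Real in
lemma exists_finset_of_invMLim_eq_zero [CompactSpace X] {f : X → X} {φ : X → ℝ} {lam ε : ℝ}
    (hopen : ∀ C : Prehistory f, IsOpen (C.shadow ε)) (h0 : invMLim f lam φ univ ε = 0)
    (N : ℕ) : ∃ Γ : Finset (Prehistory f), (∀ x, ∃ C ∈ Γ, x ∈ C.shadow ε) ∧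
      (∀ C ∈ Γ, N ≤ C.len) ∧ ∑ C ∈ Γ, exp (-lam * C.len + C.consSum φ) ≤ 1 := by
  have hlt : invM f lam φ univ N ε < 1 :=
    ((le_iSup (fun N => invM f lam φ univ N ε) N).trans_eq h0).trans_lt zero_lt_one
  obtain ⟨Γ₀, hΓ₀⟩ := iInf_lt_iff.1 hlt
  obtain ⟨⟨hcov, hlen⟩, hsum⟩ := iInf_lt_iff.1 hΓ₀
  obtain ⟨t, ht⟩ := isCompact_univ.elim_finite_subcover (fun C : Γ₀ => C.1.shadow ε)
    (fun C => hopen C) fun x hx => by simpa using hcov hx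
  refine ⟨t.map (Embedding.subtype _), fun x => ?_, by simpa using fun C hC _ => hlen C hC, ?_⟩
  · obtain ⟨C, hC, hx⟩ := mem_iUnion₂.1 (ht (mem_univ x))
    exact ⟨C, Finset.mem_map_of_mem _ hC, hx⟩
  · rw [← ENNReal.ofReal_le_ofReal_iff zero_le_one, ENNReal.ofReal_sum_of_nonneg
      fun _ _ => (exp_pos _).le, ENNReal.ofReal_one, Finset.sum_map]
    exact ((ENNReal.sum_le_tsum t).trans hsum.le)

section Homeomorph

open Real ExpGrowth Topology

variable [CompactSpace X] (f : X ≃ₜ X) (φ : X → ℝ)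

lemma expGrowthSup_sepSum_le_of_invMLim_eq_zero (hφ : Continuous φ) {ε ε' δ lam : ℝ}
    (hδ : 0 ≤ δ) (hφε : ∀ {x y}, dist x y < ε → dist (φ x) (φ y) < δ) (hεε' : 2 * ε ≤ ε')
    (h0 : invMLim f lam φ univ ε = 0) (N : ℕ) :
    expGrowthSup (fun n => sepSum f φ n ε') ≤ ((lam + δ + |lam| / (N + 1) : ℝ) : EReal) := by
  obtain ⟨Γ, hcov, hlen, hw⟩ := exists_finset_of_invMLim_eq_zero
    (fun C => (C.shadow_eq_bowenBall f.toEquiv ε).symm ▸ isOpen_bowenBall f.symm.continuous _ _ _)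
    h0 N
  obtain ⟨K, hK⟩ := isCompact_univ.exists_bound_of_continuousOn hφ.continuousOn
  set r := lam + δ + |lam| / (N + 1)
  set D := 2 * ((Γ.sup Prehistory.len : ℕ) + 1) * (K + |lam|)
  have hsep : ∀ n : ℕ, sepSum f φ n ε' ≤ ENNReal.ofReal (exp D) * EReal.exp (r * n) := by
    intro n
    calc sepSum f φ n ε' = sepSum f.symm φ n ε' := (sepSum_symm f.toEquiv φ n ε').symm
      _ ≤ ENNReal.ofReal (exp (r * n + D)) := sepSum_le_ofReal fun E hE =>
        sum_exp_birkhoff_le_of_cover hφε hδ (fun x => by simpa using hK x (mem_univ x))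
          (y := fun C => C.pts 0) (fun x => (hcov x).imp fun C ⟨hC, hx⟩ =>
            ⟨hC, by rwa [Prehistory.shadow_eq_bowenBall f.toEquiv] at hx⟩)
          hlen (fun C hC => Finset.le_sup hC)
          (by simpa [Prehistory.consSum_eq_birkhoff f.toEquiv] using hw) n E (hE.mono hεε')
      _ = ENNReal.ofReal (exp D) * EReal.exp (r * n) := by
        rw [← EReal.coe_natCast, ← EReal.coe_mul, EReal.exp_coe,
          ← ENNReal.ofReal_mul (exp_pos _).le, ← exp_add, add_comm]
  calc expGrowthSup (fun n => sepSum f φ n ε') ≤ expGrowthSup (fun n => EReal.exp (r * n)) :=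
        expGrowthSup_le_of_eventually_le ENNReal.ofReal_ne_top (Eventually.of_forall hsep)
    _ = r := expGrowthSup_exp

lemma topPress_le_invPress (hφ : Continuous φ) : topPress f φ ≤ invPress f φ univ := by
  rw [topPress_eq_iSup_expGrowthSup]
  refine iSup₂_le fun ε' hε' => EReal.le_of_forall_lt_iff_le.1 fun z hz => ?_
  obtain ⟨z', hz', hz'z⟩ := EReal.exists_between_coe_real hz
  have hz'z : z' < z := by exact_mod_cast hz'z
  set δ := (z - z') / 2
  have hδ : 0 < δ := by simp only [δ]; linarith
  obtain ⟨ε₀, hε₀, hφε₀⟩ := Metric.uniformContinuous_iff.1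
    (CompactSpace.uniformContinuous_of_continuous hφ) δ hδ
  set ε := min ε₀ (ε' / 2)
  have hε : 0 < ε := lt_min hε₀ (half_pos hε')
  obtain ⟨_, ⟨lam, rfl, h0⟩, hlam⟩ := sInf_lt_iff.1 <|
    (le_iSup₂ (f := fun ε (_ : 0 < ε) => invPressEps f φ univ ε) ε hε).trans_lt hz'
  have hlam : lam < z' := by exact_mod_cast hlam
  obtain ⟨N, hN⟩ := exists_nat_gt (|lam| / δ)
  have hN' : |lam| / (N + 1) ≤ δ := by
    rw [div_lt_iff₀ hδ] at hN
    rw [div_le_iff₀ (by positivity)]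
    nlinarith
  refine (expGrowthSup_sepSum_le_of_invMLim_eq_zero f φ hφ hδ.le
    (fun h => hφε₀ (h.trans_le (min_le_left _ _))) (by linarith [min_le_right ε₀ (ε' / 2)])
    h0 N).trans ?_
  exact_mod_cast (by simp only [δ] at hN' ⊢; linarith : lam + δ + |lam| / (N + 1) ≤ z)

lemma invM_le_ofReal_exp_mul_sepSum (lam : ℝ) {ε : ℝ} (hε : 0 < ε) {N n : ℕ} (hN : N ≤ n) :
    invM f lam φ univ N ε ≤ ENNReal.ofReal (exp (-lam * n)) * sepSum f φ (n + 1) (ε / 2) := by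
  obtain ⟨E, hE, hspan⟩ :=
    exists_isSeparatedSet_forall_exists_dist_le f.symm.continuous (n + 1) (half_pos hε)
  let F : E → Prehistory f := fun y => Prehistory.backwardOrbit f.toEquiv y n
  have hcov : ECovers (range F) univ ε := fun x _ => by
    obtain ⟨y, hy, hxy⟩ := hspan x
    refine mem_iUnion₂.2 ⟨F ⟨y, hy⟩, mem_range_self _, ?_⟩
    rw [Prehistory.shadow_eq_bowenBall f.toEquiv]
    exact fun i hi => (hxy i hi).trans_lt (half_lt_self hε)
  calc invM f lam φ univ N ε
      ≤ ∑' C : range F, ENNReal.ofReal (exp (-lam * C.1.len + C.1.consSum φ)) :=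
        iInf₂_le _ ⟨hcov, by rintro _ ⟨y, rfl⟩; exact hN⟩
    _ ≤ ∑' y : E, ENNReal.ofReal (exp (-lam * (F y).len + (F y).consSum φ)) :=
        ENNReal.tsum_le_tsum_comp_of_surjective rangeFactorization_surjective
          fun C : range F => ENNReal.ofReal (exp (-lam * C.1.len + C.1.consSum φ))
    _ = ENNReal.ofReal (exp (-lam * n)) *
          ∑ y ∈ E, ENNReal.ofReal (exp (birkhoff f.symm φ (n + 1) y)) := by
        rw [Finset.tsum_subtype E fun y => ENNReal.ofReal
          (exp (-lam * (Prehistory.backwardOrbit f.toEquiv y n).len +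
            (Prehistory.backwardOrbit f.toEquiv y n).consSum φ)), Finset.mul_sum]
        refine Finset.sum_congr rfl fun y _ => ?_
        rw [Prehistory.consSum_eq_birkhoff, exp_add, ENNReal.ofReal_mul (exp_pos _).le]
        rfl
    _ ≤ ENNReal.ofReal (exp (-lam * n)) * sepSum f φ (n + 1) (ε / 2) := by
        gcongr
        refine le_trans ?_ (sepSum_symm f.toEquiv φ (n + 1) (ε / 2)).le
        exact le_iSup₂ (f := fun E (_ : IsSeparatedSet f.symm (n + 1) (ε / 2) E) =>
          ∑ x ∈ E, ENNReal.ofReal (exp (birkhoff f.symm φ (n + 1) x))) E hE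

lemma invPress_le_topPress : invPress f φ univ ≤ topPress f φ := by
  refine iSup₂_le fun ε hε => EReal.le_of_forall_lt_iff_le.1 fun lam hlam => ?_
  refine sInf_le ⟨lam, rfl, ENNReal.iSup_eq_zero.2 fun N => ?_⟩
  have hgrowth : expGrowthSup (fun n => sepSum f φ n (ε / 2)) < lam := by
    refine lt_of_le_of_lt ?_ hlam
    rw [topPress_eq_iSup_expGrowthSup]
    exact le_iSup₂ (f := fun ε (_ : 0 < ε) => expGrowthSup fun n => sepSum f φ n ε) _ (half_pos hε)
  obtain ⟨lam', hlam', hlam'lam⟩ := EReal.exists_between_coe_real hgrowth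
  have hlt : lam' < lam := by exact_mod_cast hlam'lam
  have hbound : ∀ᶠ n : ℕ in atTop,
      invM f lam φ univ N ε ≤ ENNReal.ofReal (exp (lam' + (lam' - lam) * n)) := by
    filter_upwards [(tendsto_add_atTop_nat 1).eventually (eventually_le_exp hlam'),
      eventually_ge_atTop N] with n hn hNn
    refine (invM_le_ofReal_exp_mul_sepSum f φ lam hε hNn).trans ?_
    rw [← EReal.coe_natCast, ← EReal.coe_mul, EReal.exp_coe] at hn
    grw [hn, ← ENNReal.ofReal_mul (exp_pos _).le, ← exp_add]
    exact le_of_eq (by push_cast; ring_nf)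
  have hdecay : Tendsto (fun n : ℕ => ENNReal.ofReal (exp (lam' + (lam' - lam) * n))) atTop (𝓝 0) := by
    rw [← ENNReal.ofReal_zero]
    exact ENNReal.tendsto_ofReal <| tendsto_exp_atBot.comp <| tendsto_atBot_add_const_left _ _ <|
      tendsto_natCast_atTop_atTop.const_mul_atTop_of_neg (by linarith)
  exact nonpos_iff_eq_zero.1 (ge_of_tendsto hdecay hbound)

end Homeomorph

theorem stmt2 [CompactSpace X] (f : X ≃ₜ X) (φ : X → ℝ) (hφ : Continuous φ) :
    invPress (⇑f) φ Set.univ = topPress (⇑f) φ :=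
  le_antisymm (invPress_le_topPress f φ) (topPress_le_invPress f φ hφ)
end

section
/- Let (X,d) be a compact metric space, f : X → X a continuous surjective map, Y ⊆ X, and φ, ψ : X → ℝ continuous. Then P⁻_f(φ + ψ∘f − ψ, Y) = P⁻_f(φ, Y). -/
open Filter Set Function
open scoped ENNReal NNReal BigOperators

variable {X : Type*} [MetricSpace X]

/-!
Along a prehistory `C = (y, y₋₁, …, y₋ₘ)` the coboundary `ψ ∘ f - ψ` telescopes, so the consecutive
sums of `φ + ψ ∘ f - ψ` and of `φ` differ by `ψ (f y) - ψ (y₋ₘ)`, which is at most `2 sup |ψ|` in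
absolute value. Changing the weights of every cover by a bounded factor `e^{±2 sup |ψ|}` does not
change which `λ` make `M⁻_f(λ, ·, Y, ε)` vanish, so all the `ε`-inverse pressures agree.
-/

namespace Prehistory

variable {α : Type*} {f : α → α}

lemma consSum_add_coboundary (C : Prehistory f) (φ ψ : α → ℝ) :
    C.consSum (fun x => φ x + ψ (f x) - ψ x)
      = C.consSum φ + ψ (f (C.pts 0)) - ψ (C.pts C.len) := by
  have hshift : ∑ i ∈ Finset.range (C.len + 1), ψ (f (C.pts i))
      = ψ (f (C.pts 0)) + ∑ i ∈ Finset.range C.len, ψ (C.pts i) := by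
    rw [Finset.sum_range_succ', add_comm]
    congr 1
    exact Finset.sum_congr rfl fun i hi => by rw [C.isPre i (Finset.mem_range.mp hi)]
  simp only [consSum, Finset.sum_add_distrib, Finset.sum_sub_distrib, hshift,
    Finset.sum_range_succ (fun i => ψ (C.pts i))]
  ring

lemma abs_consSum_add_coboundary_sub_le (C : Prehistory f) (φ ψ : α → ℝ) {K : ℝ}
    (hK : ∀ x, |ψ x| ≤ K) :
    |C.consSum (fun x => φ x + ψ (f x) - ψ x) - C.consSum φ| ≤ 2 * K := by
  rw [consSum_add_coboundary, add_sub_assoc, add_sub_cancel_left]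
  linarith [abs_sub (ψ (f (C.pts 0))) (ψ (C.pts C.len)), hK (f (C.pts 0)), hK (C.pts C.len)]

end Prehistory

section InversePressure

variable {f : X → X} {lam : ℝ} {φ₁ φ₂ : X → ℝ} {Y : Set X} {ε K : ℝ}

lemma invM_le_exp_mul (N : ℕ) (hK : ∀ C : Prehistory f, C.consSum φ₁ ≤ C.consSum φ₂ + K) :
    invM f lam φ₁ Y N ε ≤ ENNReal.ofReal (Real.exp K) * invM f lam φ₂ Y N ε := by
  have hc₀ : ENNReal.ofReal (Real.exp K) ≠ 0 := by simp [Real.exp_pos]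
  rw [invM, invM, ENNReal.mul_iInf_of_ne hc₀ ENNReal.ofReal_ne_top]
  refine iInf_mono fun Γ => ?_
  rw [ENNReal.mul_iInf_of_ne hc₀ ENNReal.ofReal_ne_top]
  refine iInf_mono fun _ => ?_
  rw [← ENNReal.tsum_mul_left]
  refine ENNReal.tsum_le_tsum fun C => ?_
  rw [← ENNReal.ofReal_mul (Real.exp_pos K).le, ← Real.exp_add]
  exact ENNReal.ofReal_le_ofReal (Real.exp_le_exp.mpr (by linarith [hK C.1]))

lemma invMLim_le_exp_mul (hK : ∀ C : Prehistory f, C.consSum φ₁ ≤ C.consSum φ₂ + K) :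
    invMLim f lam φ₁ Y ε ≤ ENNReal.ofReal (Real.exp K) * invMLim f lam φ₂ Y ε := by
  rw [invMLim, invMLim, ENNReal.mul_iSup]
  exact iSup_mono fun N => invM_le_exp_mul N hK

lemma invMLim_eq_zero_iff_of_abs_consSum_sub_le
    (hK : ∀ C : Prehistory f, |C.consSum φ₁ - C.consSum φ₂| ≤ K) :
    invMLim f lam φ₁ Y ε = 0 ↔ invMLim f lam φ₂ Y ε = 0 := by
  have h₁₂ (C : Prehistory f) : C.consSum φ₁ ≤ C.consSum φ₂ + K := by
    linarith [(abs_le.mp (hK C)).2]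
  have h₂₁ (C : Prehistory f) : C.consSum φ₂ ≤ C.consSum φ₁ + K := by
    linarith [(abs_le.mp (hK C)).1]
  constructor <;> intro h <;> refine le_antisymm ?_ zero_le
  · simpa [h] using invMLim_le_exp_mul (lam := lam) (Y := Y) (ε := ε) h₂₁
  · simpa [h] using invMLim_le_exp_mul (lam := lam) (Y := Y) (ε := ε) h₁₂

lemma invPress_eq_of_abs_consSum_sub_le
    (hK : ∀ C : Prehistory f, |C.consSum φ₁ - C.consSum φ₂| ≤ K) :
    invPress f φ₁ Y = invPress f φ₂ Y := by
  have hεpress ε : invPressEps f φ₁ Y ε = invPressEps f φ₂ Y ε := by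
    simp only [invPressEps, invMLim_eq_zero_iff_of_abs_consSum_sub_le hK]
  simp only [invPress, hεpress]

end InversePressure

theorem stmt8_general [CompactSpace X] (f : X → X)
    (Y : Set X) (φ ψ : X → ℝ) (hψ : Continuous ψ) :
    invPress f (fun x => φ x + ψ (f x) - ψ x) Y = invPress f φ Y := by
  obtain ⟨K, hK⟩ := (isCompact_range hψ.abs).bddAbove
  exact invPress_eq_of_abs_consSum_sub_le fun C =>
    C.abs_consSum_add_coboundary_sub_le φ ψ fun x => hK (mem_range_self x)

theorem stmt8 [CompactSpace X] (f : X → X) (hf : Continuous f) (hfs : Surjective f)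
    (Y : Set X) (φ ψ : X → ℝ) (hφ : Continuous φ) (hψ : Continuous ψ) :
    invPress f (fun x => φ x + ψ (f x) - ψ x) Y = invPress f φ Y :=
  stmt8_general f Y φ ψ hψ
end

section
/- Let (X,d) be a compact metric space, f : X → X a continuous surjective map, Y ⊆ X, and φ : X → ℝ a continuous function that is strictly negative on X. If P⁻_f(·, Y) is finitely valued, then the map t ↦ P⁻_f(t·φ, Y) is strictly decreasing on ℝ; moreover, for every ε > 0 the map t ↦ P⁻_f(t·φ, Y, ε) is strictly decreasing on ℝ. -/
open Filter Set Function
open scoped ENNReal NNReal BigOperators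

variable {X : Type*} [MetricSpace X]

/-!
If `φ ≤ -a < 0` (compactness), then `t φ + (t - s) a ≤ s φ` pointwise for `s < t`, and adding a
constant `c` to a potential raises the `ε`-inverse pressure, hence the inverse pressure, by at
least `c`: the consecutive sum of an `m`-prehistory gains `(m + 1) c`, which pays for replacing
`λ` by `λ + c`. So `P⁻(t φ) + (t - s) a ≤ P⁻(s φ)`, and the inequality is strict because the
pressures are finite: `P⁻` by hypothesis, and `P⁻(·, ε)` lies between `min (t φ)` and `P⁻`,
the lower bound needing `Y ≠ ∅`, which holds since `P⁻(·, ∅) = ⊥`.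
-/

lemma EReal.lt_of_add_le_of_pos {x y : EReal} {c : ℝ} (hc : 0 < c) (hx : x ≠ ⊥) (hx' : x ≠ ⊤)
    (h : x + c ≤ y) : x < y := by
  rw [← EReal.coe_toReal hx' hx] at h ⊢
  exact (EReal.coe_lt_coe_iff.2 (lt_add_of_pos_right _ hc)).trans_le h

lemma exists_pos_forall_le_neg_of_forall_neg {Z : Type*} [TopologicalSpace Z] [CompactSpace Z]
    [Nonempty Z] {φ : Z → ℝ} (hφ : Continuous φ) (hneg : ∀ x, φ x < 0) :
    ∃ a > 0, ∀ x, φ x ≤ -a := by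
  obtain ⟨x₀, -, hx₀⟩ := isCompact_univ.exists_isMaxOn univ_nonempty hφ.continuousOn
  exact ⟨-φ x₀, neg_pos.2 (hneg x₀), fun x => by simpa using hx₀ (mem_univ x)⟩

lemma Prehistory.consSum_add_le_of_add_le {Z : Type*} {g : Z → Z} {ψ χ : Z → ℝ} {c : ℝ}
    (h : ∀ x, ψ x + c ≤ χ x) (C : Prehistory g) : C.consSum ψ + (C.len + 1) * c ≤ C.consSum χ := by
  have := Finset.sum_le_sum fun i (_ : i ∈ Finset.range (C.len + 1)) => h (C.pts i)
  simpa [Prehistory.consSum, Finset.sum_add_distrib, mul_comm] using this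

section InversePressure

variable (f : X → X)

/-- The `n(C) + 1` terms of the consecutive sum gain `c` each, while raising `λ` by `c` costs
only `n(C) c`. -/
lemma invM_le_exp_neg_mul_invM {ψ χ : X → ℝ} {c : ℝ} (h : ∀ x, ψ x + c ≤ χ x)
    (lam : ℝ) (Y : Set X) (N : ℕ) (ε : ℝ) :
    invM f lam ψ Y N ε ≤ ENNReal.ofReal (Real.exp (-c)) * invM f (lam + c) χ Y N ε := by
  have hne : ENNReal.ofReal (Real.exp (-c)) ≠ 0 := by simp [Real.exp_pos]
  simp only [invM, ENNReal.mul_iInf_of_ne hne ENNReal.ofReal_ne_top]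
  refine le_iInf₂ fun Γ hΓ => iInf₂_le_of_le Γ hΓ ?_
  rw [← ENNReal.tsum_mul_left]
  refine ENNReal.tsum_le_tsum fun C => ?_
  rw [← ENNReal.ofReal_mul (Real.exp_pos _).le, ← Real.exp_add]
  refine ENNReal.ofReal_le_ofReal (Real.exp_le_exp.2 ?_)
  nlinarith [C.1.consSum_add_le_of_add_le h]

lemma invMLim_eq_zero_of_add_le {ψ χ : X → ℝ} {c : ℝ} (h : ∀ x, ψ x + c ≤ χ x)
    {lam : ℝ} {Y : Set X} {ε : ℝ} (hz : invMLim f (lam + c) χ Y ε = 0) :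
    invMLim f lam ψ Y ε = 0 := by
  refine le_antisymm (iSup_le fun N => ?_) zero_le
  calc invM f lam ψ Y N ε ≤ ENNReal.ofReal (Real.exp (-c)) * invM f (lam + c) χ Y N ε :=
        invM_le_exp_neg_mul_invM f h lam Y N ε
    _ ≤ ENNReal.ofReal (Real.exp (-c)) * invMLim f (lam + c) χ Y ε :=
        mul_le_mul_right (le_iSup (fun N => invM f (lam + c) χ Y N ε) N) _
    _ = 0 := by rw [hz, mul_zero]

lemma invPressEps_add_le_of_add_le {ψ χ : X → ℝ} {c : ℝ} (h : ∀ x, ψ x + c ≤ χ x)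
    (Y : Set X) (ε : ℝ) :
    invPressEps f ψ Y ε + c ≤ invPressEps f χ Y ε := by
  refine le_sInf ?_
  rintro _ ⟨lam, rfl, hz⟩
  have hψ : invPressEps f ψ Y ε ≤ ((lam - c : ℝ) : EReal) :=
    sInf_le ⟨lam - c, rfl, invMLim_eq_zero_of_add_le f h (by rwa [sub_add_cancel])⟩
  calc invPressEps f ψ Y ε + c ≤ ((lam - c : ℝ) : EReal) + c := add_le_add_left hψ _
    _ = lam := by norm_cast; ring

lemma invPressEps_le_invPress (ψ : X → ℝ) (Y : Set X) {ε : ℝ} (hε : 0 < ε) :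
    invPressEps f ψ Y ε ≤ invPress f ψ Y :=
  le_iSup₂_of_le ε hε le_rfl

lemma invPress_add_le_of_add_le {ψ χ : X → ℝ} {c : ℝ} (h : ∀ x, ψ x + c ≤ χ x) (Y : Set X) :
    invPress f ψ Y + c ≤ invPress f χ Y := by
  refine EReal.add_le_of_le_sub (iSup₂_le fun ε hε => ?_)
  rw [EReal.le_sub_iff_add_le (.inl (EReal.coe_ne_bot c)) (.inl (EReal.coe_ne_top c))]
  exact (invPressEps_add_le_of_add_le f h Y ε).trans (invPressEps_le_invPress f χ Y hε)

/-- A single `C ∈ Γ` covering a point of `Y` already contributes `e^{(n(C)+1) m - λ n(C)} ≥ e^m`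
to `M⁻(λ, ψ, Y, 0, ε)` when `λ < m`. -/
lemma coe_le_invPressEps {ψ : X → ℝ} {m : ℝ} (hm : ∀ x, m ≤ ψ x) {Y : Set X}
    (hY : Y.Nonempty) (ε : ℝ) : (m : EReal) ≤ invPressEps f ψ Y ε := by
  refine le_sInf ?_
  rintro _ ⟨lam, rfl, hz⟩
  by_contra! hlt
  have hlam : lam ≤ m := by exact_mod_cast hlt.le
  have hbound : ENNReal.ofReal (Real.exp m) ≤ invM f lam ψ Y 0 ε := by
    refine le_iInf₂ fun Γ hΓ => ?_
    obtain ⟨y, hy⟩ := hY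
    obtain ⟨C, hC, -⟩ := mem_iUnion₂.1 (hΓ.1 hy)
    refine le_trans ?_ (ENNReal.le_tsum (⟨C, hC⟩ : Γ))
    refine ENNReal.ofReal_le_ofReal (Real.exp_le_exp.2 ?_)
    show m ≤ -lam * C.len + C.consSum ψ
    have hS : (C.len + 1) * m ≤ C.consSum ψ := by
      simpa [Prehistory.consSum] using
        C.consSum_add_le_of_add_le (ψ := fun _ => 0) (c := m) (by simpa using hm)
    nlinarith [(Nat.cast_nonneg C.len : (0 : ℝ) ≤ C.len)]
  have hpos : (0 : ℝ≥0∞) < invMLim f lam ψ Y ε :=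
    calc (0 : ℝ≥0∞) < ENNReal.ofReal (Real.exp m) := by simp [Real.exp_pos]
      _ ≤ invM f lam ψ Y 0 ε := hbound
      _ ≤ invMLim f lam ψ Y ε := le_iSup (fun N => invM f lam ψ Y N ε) 0
  exact hpos.ne' hz

lemma invPressEps_ne_bot [CompactSpace X] {ψ : X → ℝ} (hψ : Continuous ψ) {Y : Set X}
    (hY : Y.Nonempty) (ε : ℝ) : invPressEps f ψ Y ε ≠ ⊥ := by
  obtain ⟨m, hm⟩ := (isCompact_range hψ).bddBelow
  exact ne_bot_of_le_ne_bot (EReal.coe_ne_bot m)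
    (coe_le_invPressEps f (fun x => hm (mem_range_self x)) hY ε)

lemma invPress_empty (ψ : X → ℝ) : invPress f ψ ∅ = ⊥ := by
  have hM : ∀ lam ε, invMLim f lam ψ ∅ ε = 0 := fun lam ε =>
    le_antisymm (iSup_le fun N => iInf₂_le_of_le ∅ ⟨by simp [ECovers], by simp⟩ (by simp))
      zero_le
  refine iSup₂_eq_bot.2 fun ε _ => sInf_eq_bot.2 fun b hb => ?_
  induction b using EReal.rec with
  | bot => exact absurd hb (lt_irrefl _)
  | coe x => exact ⟨(x - 1 : ℝ), ⟨x - 1, rfl, hM _ _⟩, by exact_mod_cast sub_one_lt x⟩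
  | top => exact ⟨(0 : ℝ), ⟨0, rfl, hM _ _⟩, EReal.coe_lt_top 0⟩

end InversePressure

theorem stmt9_general [CompactSpace X] (f : X → X)
    (Y : Set X) (φ : X → ℝ) (hφ : Continuous φ) (hneg : ∀ x : X, φ x < 0)
    (hfin : ∀ χ : X → ℝ, Continuous χ → ∃ r : ℝ, invPress f χ Y = (r : EReal)) :
    StrictAnti (fun t : ℝ => invPress f (fun x => t * φ x) Y) ∧
      ∀ ε : ℝ, 0 < ε → StrictAnti (fun t : ℝ => invPressEps f (fun x => t * φ x) Y ε) := by
  have hY : Y.Nonempty := by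
    refine nonempty_iff_ne_empty.2 fun hE => ?_
    obtain ⟨r, hr⟩ := hfin (fun _ => 0) continuous_const
    rw [hE, invPress_empty] at hr
    exact EReal.bot_ne_coe r hr
  have : Nonempty X := hY.to_subtype.map Subtype.val
  obtain ⟨a, ha, hφa⟩ := exists_pos_forall_le_neg_of_forall_neg hφ hneg
  have hcont (t : ℝ) : Continuous fun x => t * φ x := continuous_const.mul hφ
  have hshift {s t : ℝ} (hst : s < t) (x : X) : t * φ x + (t - s) * a ≤ s * φ x := by
    nlinarith [hφa x]
  have hmargin {s t : ℝ} (hst : s < t) : 0 < (t - s) * a := mul_pos (sub_pos.2 hst) ha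
  refine ⟨fun s t hst => ?_, fun ε hε s t hst => ?_⟩
  · obtain ⟨r, hr⟩ := hfin _ (hcont t)
    exact EReal.lt_of_add_le_of_pos (hmargin hst) (by simp [hr]) (by simp [hr])
      (invPress_add_le_of_add_le f (hshift hst) Y)
  · obtain ⟨r, hr⟩ := hfin _ (hcont t)
    have hfin_eps : invPressEps f (fun x => t * φ x) Y ε ≠ ⊤ :=
      ne_top_of_le_ne_top (by simp [hr]) (invPressEps_le_invPress f _ Y hε)
    exact EReal.lt_of_add_le_of_pos (hmargin hst) (invPressEps_ne_bot f (hcont t) hY ε) hfin_eps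
      (invPressEps_add_le_of_add_le f (hshift hst) Y ε)

theorem stmt9 [CompactSpace X] (f : X → X) (hf : Continuous f) (hfs : Surjective f)
    (Y : Set X) (φ : X → ℝ) (hφ : Continuous φ) (hneg : ∀ x : X, φ x < 0)
    (hfin : ∀ χ : X → ℝ, Continuous χ → ∃ r : ℝ, invPress f χ Y = (r : EReal)) :
    StrictAnti (fun t : ℝ => invPress f (fun x => t * φ x) Y) ∧
      ∀ ε : ℝ, 0 < ε → StrictAnti (fun t : ℝ => invPressEps f (fun x => t * φ x) Y ε) :=
  stmt9_general f Y φ hφ hneg hfin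
end

section
/- Let (X,d) be a compact metric space, f : X → X a continuous surjective map, ε > 0, and φ : X → ℝ a continuous function that is strictly negative on X. If the ε-inverse pressure P⁻_f(0, X, ε) of the zero function is finite, then the map t ↦ P⁻_f(t·φ, X, ε) has a unique zero t(ε), and t(ε) ≥ 0. -/
open Filter Set Function
open scoped ENNReal NNReal BigOperators

variable {X : Type*} [MetricSpace X]

/-!
Write `G t` for the `ε`-inverse pressure of `t • φ`. Changing the potential by at most `c`
pointwise changes the pressure by at most `c`, and `-b ≤ φ ≤ -a` with `0 < a ≤ b` by
compactness. Hence `G` is finite as soon as `G 0` is, and for `s ≤ t`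
`a (t - s) ≤ G s - G t ≤ b (t - s)`: `G` is continuous and strictly decreasing. Since
`G 0 ≥ 0` (for `λ < 0` every cover has weight at least `1` for the zero potential), the
intermediate value theorem on `[0, G 0 / a]` gives the unique zero.
-/

lemma Prehistory.consSum_le_consSum_add {Z : Type*} {f : Z → Z} {ψ₁ ψ₂ : Z → ℝ} {c : ℝ}
    (h : ∀ x, ψ₁ x ≤ ψ₂ x + c) (C : Prehistory f) : C.consSum ψ₁ ≤ C.consSum ψ₂ + c * C.len + c := by
  have := Finset.sum_le_sum fun i (_ : i ∈ Finset.range (C.len + 1)) => h (C.pts i)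
  simp only [Finset.sum_add_distrib, Finset.sum_const, Finset.card_range, nsmul_eq_mul] at this
  simp only [consSum]
  push_cast at this
  linarith

section InversePressure

variable {f : X → X} {Y : Set X} {ε : ℝ}

lemma invM_le_mul_invM {lam₁ lam₂ K : ℝ} {ψ₁ ψ₂ : X → ℝ}
    (h : ∀ C : Prehistory f,
      -lam₁ * C.len + C.consSum ψ₁ ≤ -lam₂ * C.len + C.consSum ψ₂ + K) (N : ℕ) :
    invM f lam₁ ψ₁ Y N ε ≤ ENNReal.ofReal (Real.exp K) * invM f lam₂ ψ₂ Y N ε := by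
  have hK₀ : ENNReal.ofReal (Real.exp K) ≠ 0 := by simp [Real.exp_pos]
  simp only [invM, ENNReal.mul_iInf_of_ne hK₀ ENNReal.ofReal_ne_top]
  refine le_iInf₂ fun Γ hΓ => (iInf₂_le Γ hΓ).trans ?_
  rw [← ENNReal.tsum_mul_left]
  refine ENNReal.tsum_le_tsum fun C => ?_
  rw [← ENNReal.ofReal_mul (Real.exp_nonneg K), ← Real.exp_add]
  exact ENNReal.ofReal_le_ofReal (Real.exp_le_exp.mpr (by linarith [h C.1]))

lemma invMLim_eq_zero_of_le_add {ψ₁ ψ₂ : X → ℝ} {c lam : ℝ} (h : ∀ x, ψ₁ x ≤ ψ₂ x + c)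
    (h₀ : invMLim f lam ψ₂ Y ε = 0) : invMLim f (lam + c) ψ₁ Y ε = 0 := by
  simp only [invMLim, ENNReal.iSup_eq_zero] at h₀ ⊢
  refine fun N => le_antisymm ?_ zero_le
  refine (invM_le_mul_invM (K := c) (fun C => ?_) N).trans_eq (by rw [h₀ N, mul_zero])
  linarith [C.consSum_le_consSum_add h]

theorem invPressEps_le_add {ψ₁ ψ₂ : X → ℝ} {c : ℝ} (h : ∀ x, ψ₁ x ≤ ψ₂ x + c) :
    invPressEps f ψ₁ Y ε ≤ invPressEps f ψ₂ Y ε + c := by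
  rw [← EReal.sub_le_iff_le_add (.inl (EReal.coe_ne_bot c)) (.inl (EReal.coe_ne_top c))]
  refine le_sInf ?_
  rintro _ ⟨lam, rfl, hlam⟩
  rw [EReal.sub_le_iff_le_add (.inl (EReal.coe_ne_bot c)) (.inl (EReal.coe_ne_top c)),
    ← EReal.coe_add]
  exact sInf_le ⟨lam + c, rfl, invMLim_eq_zero_of_le_add h hlam⟩

lemma one_le_invM_zero [Nonempty X] {lam : ℝ} (hlam : lam ≤ 0) (N : ℕ) :
    1 ≤ invM f lam (fun _ => 0) univ N ε := by
  refine le_iInf₂ fun Γ hΓ => ?_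
  obtain ⟨C, hC, -⟩ := mem_iUnion₂.mp (hΓ.1 (mem_univ (Classical.arbitrary X)))
  refine le_trans ?_ (ENNReal.le_tsum (⟨C, hC⟩ : Γ))
  rw [ENNReal.one_le_ofReal, Real.one_le_exp_iff]
  simpa [Prehistory.consSum] using mul_nonneg (neg_nonneg.mpr hlam) (Nat.cast_nonneg C.len)

theorem invPressEps_zero_nonneg [Nonempty X] : 0 ≤ invPressEps f (fun _ => 0) univ ε := by
  refine le_sInf ?_
  rintro _ ⟨lam, rfl, hlam⟩
  by_contra! hneg
  have := (one_le_invM_zero (f := f) (ε := ε) (by exact_mod_cast hneg.le) 0).trans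
    (le_iSup (fun N => invM f lam (fun _ => 0) univ N ε) 0)
  rw [← invMLim, hlam] at this
  exact absurd this (by simp)

theorem nonempty_of_invPressEps_ne_bot {ψ : X → ℝ} (h : invPressEps f ψ univ ε ≠ ⊥) :
    Nonempty X := by
  by_contra hX
  rw [not_nonempty_iff] at hX
  have h₀ : ∀ lam : ℝ, invMLim f lam ψ univ ε = 0 := fun lam => by
    refine ENNReal.iSup_eq_zero.mpr fun N => le_antisymm ?_ zero_le
    refine (iInf₂_le ∅ ⟨fun x => hX.elim x, fun C hC => hC.elim⟩).trans ?_
    simp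
  refine h ((EReal.eq_bot_iff_forall_lt _).mpr fun y => ?_)
  have hle : invPressEps f ψ univ ε ≤ ((y - 1 : ℝ) : EReal) := sInf_le ⟨y - 1, rfl, h₀ _⟩
  exact hle.trans_lt (by exact_mod_cast sub_one_lt y)

theorem exists_invPressEps_eq_coe {ψ₁ ψ₂ : X → ℝ} {r c : ℝ} (hr : invPressEps f ψ₂ Y ε = r)
    (h : ∀ x, |ψ₁ x - ψ₂ x| ≤ c) : ∃ s : ℝ, invPressEps f ψ₁ Y ε = s := by
  have hle : invPressEps f ψ₁ Y ε ≤ ((r + c : ℝ) : EReal) := by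
    rw [EReal.coe_add, ← hr]
    exact invPressEps_le_add fun x => by linarith [(abs_le.mp (h x)).2]
  have hge : (r : EReal) ≤ invPressEps f ψ₁ Y ε + c := by
    rw [← hr]
    exact invPressEps_le_add fun x => by linarith [(abs_le.mp (h x)).1]
  refine ⟨(invPressEps f ψ₁ Y ε).toReal, (EReal.coe_toReal ?_ ?_).symm⟩
  · exact (hle.trans_lt (EReal.coe_lt_top _)).ne
  · rintro hbot
    rw [hbot, EReal.bot_add] at hge
    exact EReal.coe_ne_bot r (le_bot_iff.mp hge)

end InversePressure

section DecreasingFunction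

variable {G : ℝ → ℝ} {a b : ℝ}

lemma strictAnti_of_add_mul_le (ha : 0 < a) (hdec : ∀ s t, s ≤ t → G t + a * (t - s) ≤ G s) :
    StrictAnti G := fun s t hst => by nlinarith [hdec s t hst.le]

lemma lipschitzWith_of_antitone_of_le_add_mul (hG : Antitone G)
    (hinc : ∀ s t, s ≤ t → G s ≤ G t + b * (t - s)) : LipschitzWith (Real.toNNReal b) G := by
  refine LipschitzWith.of_dist_le_mul fun s t => ?_
  wlog hst : s ≤ t generalizing s t
  · simpa only [dist_comm] using this t s (le_of_not_ge hst)
  rw [Real.dist_eq, Real.dist_eq, abs_of_nonneg (sub_nonneg.mpr (hG hst)),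
    abs_of_nonpos (sub_nonpos.mpr hst), neg_sub]
  calc G s - G t ≤ b * (t - s) := by linarith [hinc s t hst]
    _ ≤ _ := mul_le_mul_of_nonneg_right (Real.le_coe_toNNReal b) (sub_nonneg.mpr hst)

lemma exists_nonneg_eq_zero_of_add_mul_le (ha : 0 < a) (hG : Continuous G)
    (hdec : ∀ s t, s ≤ t → G t + a * (t - s) ≤ G s) (h₀ : 0 ≤ G 0) : ∃ t, 0 ≤ t ∧ G t = 0 := by
  have hT : 0 ≤ G 0 / a := div_nonneg h₀ ha.le
  have hGT : G (G 0 / a) ≤ 0 := by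
    have := hdec 0 _ hT
    rw [sub_zero, mul_div_cancel₀ _ ha.ne'] at this
    linarith
  obtain ⟨t, ht, hGt⟩ := intermediate_value_Icc' hT hG.continuousOn ⟨hGT, h₀⟩
  exact ⟨t, ht.1, hGt⟩

theorem existsUnique_zero_of_add_mul_le_of_le_add_mul (ha : 0 < a)
    (hdec : ∀ s t, s ≤ t → G t + a * (t - s) ≤ G s)
    (hinc : ∀ s t, s ≤ t → G s ≤ G t + b * (t - s)) (h₀ : 0 ≤ G 0) :
    ∃ t, 0 ≤ t ∧ G t = 0 ∧ ∀ t', G t' = 0 → t' = t := by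
  have hanti := strictAnti_of_add_mul_le ha hdec
  obtain ⟨t, ht, hGt⟩ := exists_nonneg_eq_zero_of_add_mul_le ha
    (lipschitzWith_of_antitone_of_le_add_mul hanti.antitone hinc).continuous hdec h₀
  exact ⟨t, ht, hGt, fun t' ht' => hanti.injective (ht'.trans hGt.symm)⟩

end DecreasingFunction

theorem stmt12_general [CompactSpace X] (f : X → X)
    (ε : ℝ) (φ : X → ℝ) (hφ : Continuous φ) (hneg : ∀ x : X, φ x < 0)
    (hfin : ∃ r : ℝ, invPressEps f (fun _ => (0 : ℝ)) Set.univ ε = (r : EReal)) :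
    ∃ t : ℝ, 0 ≤ t ∧ invPressEps f (fun x => t * φ x) Set.univ ε = (0 : EReal) ∧
      ∀ t' : ℝ, invPressEps f (fun x => t' * φ x) Set.univ ε = (0 : EReal) → t' = t := by
  obtain ⟨r, hr⟩ := hfin
  have : Nonempty X := nonempty_of_invPressEps_ne_bot (hr ▸ EReal.coe_ne_bot r)
  obtain ⟨xmax, -, hmax⟩ := isCompact_univ.exists_isMaxOn univ_nonempty hφ.continuousOn
  obtain ⟨xmin, -, hmin⟩ := isCompact_univ.exists_isMinOn univ_nonempty hφ.continuousOn
  replace hmax : ∀ x, φ x ≤ φ xmax := fun x => hmax (mem_univ x)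
  replace hmin : ∀ x, φ xmin ≤ φ x := fun x => hmin (mem_univ x)
  have hbound : ∀ t x, |t * φ x - 0| ≤ |t| * -φ xmin := fun t x => by
    rw [sub_zero, abs_mul, abs_of_neg (hneg x)]
    exact mul_le_mul_of_nonneg_left (by linarith [hmin x]) (abs_nonneg t)
  choose G hG using fun t => exists_invPressEps_eq_coe hr (hbound t)
  have hG_le : ∀ s t c, (∀ x, (t - s) * φ x ≤ c) → G t ≤ G s + c := fun s t c h => by
    have := invPressEps_le_add (f := f) (Y := univ) (ε := ε) (ψ₂ := fun x => s * φ x)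
      (fun x => by linarith [h x] : ∀ x, t * φ x ≤ s * φ x + c)
    rwa [hG, hG, ← EReal.coe_add, EReal.coe_le_coe_iff] at this
  have hdec : ∀ s t, s ≤ t → G t + -φ xmax * (t - s) ≤ G s := fun s t hst => by
    linarith [hG_le s t (φ xmax * (t - s)) fun x => by nlinarith [hmax x]]
  have hinc : ∀ s t, s ≤ t → G s ≤ G t + -φ xmin * (t - s) := fun s t hst =>
    hG_le t s _ fun x => by nlinarith [hmin x]
  have h₀ : 0 ≤ G 0 := by
    have := hG 0
    simp only [zero_mul] at this
    exact_mod_cast this ▸ invPressEps_zero_nonneg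
  obtain ⟨t, ht, hGt, huniq⟩ :=
    existsUnique_zero_of_add_mul_le_of_le_add_mul (neg_pos.mpr (hneg xmax)) hdec hinc h₀
  refine ⟨t, ht, by rw [hG, hGt, EReal.coe_zero], fun t' ht' => huniq t' ?_⟩
  rwa [hG, ← EReal.coe_zero, EReal.coe_eq_coe_iff] at ht'

theorem stmt12 [CompactSpace X] (f : X → X) (hf : Continuous f) (hfs : Surjective f)
    (ε : ℝ) (hε : 0 < ε) (φ : X → ℝ) (hφ : Continuous φ) (hneg : ∀ x : X, φ x < 0)
    (hfin : ∃ r : ℝ, invPressEps f (fun _ => (0 : ℝ)) Set.univ ε = (r : EReal)) :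
    ∃ t : ℝ, 0 ≤ t ∧ invPressEps f (fun x => t * φ x) Set.univ ε = (0 : EReal) ∧
      ∀ t' : ℝ, invPressEps f (fun x => t' * φ x) Set.univ ε = (0 : EReal) → t' = t :=
  stmt12_general f ε φ hφ hneg hfin
end

section
/- Let (X,d) be a compact metric space, f : X → X a continuous surjective map, and φ : X → ℝ a continuous function that is strictly negative on X. For n ≥ 1 let φₙ(y) := φ(y) + φ(fy) + … + φ(f^{n−1}y) be the n-th Birkhoff sum. Then for every t ∈ ℝ and every integer n ≥ 1, the inverse pressure of t·φₙ with respect to the iterate fⁿ satisfies P⁻_{fⁿ}(t·φₙ, X) = n · P⁻_f(t·φ, X). -/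
open Filter Set Function
open scoped ENNReal NNReal BigOperators

variable {X : Type*} [MetricSpace X]

/-!
An `fⁿ`-prehistory `(y, y₋₁, …, y₋ₘ)` is filled in to an `f`-prehistory of length `nm` by
inserting the intermediate images `f^j y₋ᵢ`, and conversely every `f`-prehistory of length `L`
is sampled at the indices `0, n, 2n, …` to an `fⁿ`-prehistory of length `⌊L/n⌋`. Uniform
continuity of `f, …, fⁿ⁻¹` makes the first operation map `δ`-shadows into `ε`-shadows, the
second maps `ε`-shadows into `ε`-shadows, and under both the sum of `ψ` along the
`f`-prehistory and the sum of `Sₙψ` along the `fⁿ`-prehistory differ by a bounded amount.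
So each operation carries covers to covers, multiplying the weights `exp(-λ n(C) + S⁻ψ(C))`
by a bounded factor once `λ` for `fⁿ` is matched with `nλ` for `f`, and the critical
exponents correspond under `λ ↦ nλ`.
-/

section Interpolation

variable {α : Type*} {f : α → α}

theorem iterate_apply_of_backward {zs : ℕ → α} {L : ℕ} (h : ∀ i < L, f (zs (i + 1)) = zs i)
    {j k : ℕ} (hjk : k + j ≤ L) : f^[j] (zs (k + j)) = zs k := by
  induction j with
  | zero => rfl
  | succ j ih => rw [iterate_succ_apply, ← add_assoc, h _ (by omega), ih (by omega)]

theorem iterate_apply_mul_of_backward {zs : ℕ → α} {L n m : ℕ}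
    (h : ∀ i < L, f (zs (i + 1)) = zs i) (hm : n * m ≤ L) {i : ℕ} (hi : i < m) :
    f^[n] (zs (n * (i + 1))) = zs (n * i) := by
  have : n * (i + 1) ≤ n * m := Nat.mul_le_mul_left n hi
  rw [mul_add, mul_one] at this ⊢
  exact iterate_apply_of_backward h (this.trans hm)

/-- Fills in a backward orbit `ys` of `f^[n]` to one of `f`, with `ys i` at index `n * i`. -/
def interpolate (f : α → α) (n : ℕ) (ys : ℕ → α) (k : ℕ) : α :=
  f^[n * (k ⌈/⌉ n) - k] (ys (k ⌈/⌉ n))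

theorem mul_ceilDiv_lt {n : ℕ} (hn : 0 < n) (k : ℕ) : n * (k ⌈/⌉ n) < k + n := by
  rw [Nat.ceilDiv_eq_add_pred_div]
  have := Nat.mul_div_le (k + n - 1) n
  omega

theorem interpolate_eq {n k q : ℕ} (ys : ℕ → α) (hle : k ≤ n * q) (hlt : n * q < k + n) :
    interpolate f n ys k = f^[n * q - k] (ys q) := by
  have hn : 0 < n := by omega
  have hq : k ⌈/⌉ n = q := by
    refine le_antisymm ((ceilDiv_le_iff_le_mul hn).2 hle) (Nat.lt_succ_iff.1 ?_)
    refine Nat.lt_of_mul_lt_mul_left (a := n) ?_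
    have := (ceilDiv_le_iff_le_mul hn).1 (le_refl (k ⌈/⌉ n))
    rw [Nat.succ_eq_add_one, mul_add, mul_one]
    omega
  rw [interpolate, hq]

theorem interpolate_mul {n : ℕ} (hn : 0 < n) (ys : ℕ → α) (i : ℕ) :
    interpolate f n ys (n * i) = ys i := by
  rw [interpolate_eq ys le_rfl (by omega), Nat.sub_self, iterate_zero_apply]

theorem interpolate_mul_add_succ {n : ℕ} (ys : ℕ → α) (i : ℕ) {r : ℕ} (hr : r < n) :
    interpolate f n ys (n * i + r + 1) = f^[n - (r + 1)] (ys (i + 1)) := by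
  rw [interpolate_eq ys (q := i + 1) (by rw [mul_add]; omega) (by rw [mul_add]; omega),
    show n * (i + 1) - (n * i + r + 1) = n - (r + 1) by rw [mul_add, mul_one]; omega]

theorem interpolate_succ {n m : ℕ} (hn : 0 < n) {ys : ℕ → α}
    (hys : ∀ i < m, f^[n] (ys (i + 1)) = ys i) {k : ℕ} (hk : k < n * m) :
    f (interpolate f n ys (k + 1)) = interpolate f n ys k := by
  obtain ⟨i, r, hr, rfl⟩ : ∃ i r, r < n ∧ k = n * i + r :=
    ⟨k / n, k % n, Nat.mod_lt _ hn, (Nat.div_add_mod k n).symm⟩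
  rw [interpolate_mul_add_succ ys i hr, ← iterate_succ_apply' f]
  rcases r with _ | r
  · have hi : i < m := Nat.lt_of_mul_lt_mul_left (a := n) (by omega)
    rw [add_zero, interpolate_mul hn, show (n - (0 + 1)).succ = n by omega, hys i hi]
  · rw [← add_assoc, interpolate_mul_add_succ ys i (by omega),
      show (n - (r + 1 + 1)).succ = n - (r + 1) by omega]

theorem dist_interpolate_lt [PseudoMetricSpace α] {n m : ℕ} (hn : 0 < n) {δ ε : ℝ}
    (hδ : ∀ j < n, ∀ a b : α, dist a b < δ → dist (f^[j] a) (f^[j] b) < ε)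
    {ys ys' : ℕ → α} (h : ∀ i ≤ m, dist (ys i) (ys' i) < δ) {k : ℕ} (hk : k ≤ n * m) :
    dist (interpolate f n ys k) (interpolate f n ys' k) < ε :=
  hδ _ (by have := mul_ceilDiv_lt hn k; omega) _ _
    (h _ ((ceilDiv_le_iff_le_mul hn).2 hk))

theorem interpolate_sample {n : ℕ} (hn : 0 < n) {zs : ℕ → α} {L m : ℕ}
    (h : ∀ i < L, f (zs (i + 1)) = zs i) (hm : n * m ≤ L) {k : ℕ} (hk : k ≤ n * m) :
    interpolate f n (fun i => zs (n * i)) k = zs k := by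
  have hle := (ceilDiv_le_iff_le_mul hn).1 (le_refl (k ⌈/⌉ n))
  have hL : n * (k ⌈/⌉ n) ≤ L :=
    (Nat.mul_le_mul_left n ((ceilDiv_le_iff_le_mul hn).2 hk)).trans hm
  have := iterate_apply_of_backward h (j := n * (k ⌈/⌉ n) - k) (k := k) (by omega)
  rwa [Nat.add_sub_cancel' hle] at this

theorem sum_interpolate_block {n : ℕ} (ys : ℕ → α) (g : α → ℝ) (i : ℕ) :
    ∑ r ∈ Finset.range n, g (interpolate f n ys (n * i + r + 1)) = birkhoff f g n (ys (i + 1)) := by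
  rw [birkhoff, ← Finset.sum_range_reflect (fun j => g (f^[j] (ys (i + 1))))]
  refine Finset.sum_congr rfl fun r hr => ?_
  have hr := Finset.mem_range.1 hr
  rw [interpolate_mul_add_succ ys i hr, show n - (r + 1) = n - 1 - r by omega]

theorem sum_interpolate (n : ℕ) (ys : ℕ → α) (g : α → ℝ) (m : ℕ) :
    ∑ k ∈ Finset.range (n * m), g (interpolate f n ys (k + 1)) =
      ∑ i ∈ Finset.range m, birkhoff f g n (ys (i + 1)) := by
  induction m with
  | zero => simp
  | succ m ih =>
    rw [Nat.mul_succ, Finset.sum_range_add, ih, Finset.sum_range_succ, sum_interpolate_block]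

end Interpolation

theorem abs_sum_range_le {g : ℕ → ℝ} {M : ℝ} (hg : ∀ j, |g j| ≤ M) (c : ℕ) :
    |∑ j ∈ Finset.range c, g j| ≤ c * M :=
  (Finset.abs_sum_le_sum_abs _ _).trans <| by
    simpa using Finset.sum_le_sum fun j (_ : j ∈ Finset.range c) => hg j

theorem abs_birkhoff_le_s14 {α : Type*} {f : α → α} {ψ : α → ℝ} {M : ℝ} (hM : ∀ x, |ψ x| ≤ M) (n : ℕ)
    (x : α) :
    |birkhoff f ψ n x| ≤ n * M :=
  abs_sum_range_le (fun j => hM (f^[j] x)) n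

namespace Prehistory

section Sums

variable {α : Type*} {f : α → α}

def expand {n : ℕ} (hn : 0 < n) (C : Prehistory (f^[n])) : Prehistory f where
  len := n * C.len
  pts := interpolate f n C.pts
  isPre _ hk := interpolate_succ hn C.isPre hk

def sample (n : ℕ) (C : Prehistory f) : Prehistory (f^[n]) where
  len := C.len / n
  pts i := C.pts (n * i)
  isPre _ hi := iterate_apply_mul_of_backward C.isPre (Nat.mul_div_le C.len n) hi

theorem consSum_expand_add {n : ℕ} (hn : 0 < n) (C : Prehistory (f^[n])) (ψ : α → ℝ) :
    (C.expand hn).consSum ψ + birkhoff f ψ n (C.pts 0) =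
      C.consSum (birkhoff f ψ n) + ψ (C.pts 0) := by
  have h0 : interpolate f n C.pts 0 = C.pts 0 := by simpa using interpolate_mul hn C.pts 0
  simp only [consSum, expand]
  rw [Finset.sum_range_succ', Finset.sum_range_succ', sum_interpolate, h0]
  ring

theorem abs_consSum_expand_sub_le {n : ℕ} (hn : 0 < n) (C : Prehistory (f^[n])) {ψ : α → ℝ}
    {M : ℝ} (hM : ∀ x, |ψ x| ≤ M) :
    |(C.expand hn).consSum ψ - C.consSum (birkhoff f ψ n)| ≤ (n + 1) * M := by
  rw [show (C.expand hn).consSum ψ - C.consSum (birkhoff f ψ n) =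
      ψ (C.pts 0) - birkhoff f ψ n (C.pts 0) by linarith [consSum_expand_add hn C ψ]]
  calc |ψ (C.pts 0) - birkhoff f ψ n (C.pts 0)|
      ≤ |ψ (C.pts 0)| + |birkhoff f ψ n (C.pts 0)| := abs_sub _ _
    _ ≤ M + n * M := add_le_add (hM _) (abs_birkhoff_le_s14 hM n _)
    _ = (n + 1) * M := by ring

theorem consSum_sample_le {n : ℕ} (hn : 0 < n) (C : Prehistory f) {ψ : α → ℝ} {M : ℝ}
    (hM : ∀ x, |ψ x| ≤ M) :
    (C.sample n).consSum (birkhoff f ψ n) ≤ C.consSum ψ + (2 * n + 1) * M := by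
  have hlt := Nat.lt_mul_div_succ C.len hn
  set m := C.len / n
  have hm : n * m ≤ C.len := Nat.mul_div_le C.len n
  have hM0 : 0 ≤ M := (abs_nonneg _).trans (hM (C.pts 0))
  have h_expand := abs_le.1 (abs_consSum_expand_sub_le hn (C.sample n) hM)
  have h_head : ((C.sample n).expand hn).consSum ψ = ∑ k ∈ Finset.range (n * m + 1), ψ (C.pts k) :=
    Finset.sum_congr rfl fun k hk =>
      congrArg ψ (interpolate_sample hn C.isPre hm (Nat.lt_succ_iff.1 (Finset.mem_range.1 hk)))
  have h_split : C.consSum ψ = ∑ k ∈ Finset.range (n * m + 1), ψ (C.pts k) +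
      ∑ j ∈ Finset.range (C.len - n * m), ψ (C.pts (n * m + 1 + j)) := by
    rw [consSum, ← Finset.sum_range_add, show n * m + 1 + (C.len - n * m) = C.len + 1 by omega]
  have h_tail : |∑ j ∈ Finset.range (C.len - n * m), ψ (C.pts (n * m + 1 + j))| ≤ n * M := by
    refine (abs_sum_range_le (fun j => hM _) _).trans (mul_le_mul_of_nonneg_right ?_ hM0)
    rw [mul_add, mul_one] at hlt
    exact_mod_cast (by omega : C.len - n * m ≤ n)
  linarith [abs_le.1 h_tail]

end Sums

section Shadows

variable {f : X → X}

theorem shadow_subset_shadow_sample (n : ℕ) (C : Prehistory f) (ε : ℝ) :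
    C.shadow ε ⊆ (C.sample n).shadow ε := by
  rintro z ⟨zs, rfl, hzs, hdist⟩
  have hm : n * (C.len / n) ≤ C.len := Nat.mul_div_le C.len n
  exact ⟨fun i => zs (n * i), congrArg zs (mul_zero n),
    fun _ hi => iterate_apply_mul_of_backward hzs hm hi,
    fun _ hi => hdist _ ((Nat.mul_le_mul_left n hi).trans hm)⟩

theorem shadow_subset_shadow_expand {n : ℕ} (hn : 0 < n) (C : Prehistory (f^[n])) {δ ε : ℝ}
    (hδ : ∀ j < n, ∀ a b : X, dist a b < δ → dist (f^[j] a) (f^[j] b) < ε) :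
    C.shadow δ ⊆ (C.expand hn).shadow ε := by
  rintro z ⟨zs, rfl, hzs, hdist⟩
  refine ⟨interpolate f n zs, ?_, fun _ hk => interpolate_succ hn hzs hk,
    fun _ hk => dist_interpolate_lt hn hδ hdist hk⟩
  simpa using interpolate_mul hn zs 0

end Shadows

end Prehistory

section Transfer

variable {f₁ f₂ : X → X} {lam₁ lam₂ : ℝ} {φ₁ φ₂ : X → ℝ} {Y : Set X} {ε₁ ε₂ : ℝ}

theorem invM_le_mul_invM_s14 {N₁ N₂ : ℕ} (T : Prehistory f₁ → Prehistory f₂) (c : ℝ)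
    (hsh : ∀ C, C.shadow ε₁ ⊆ (T C).shadow ε₂) (hlen : ∀ C, N₁ ≤ C.len → N₂ ≤ (T C).len)
    (hw : ∀ C, -lam₂ * ((T C).len : ℝ) + (T C).consSum φ₂ ≤
      c + (-lam₁ * (C.len : ℝ) + C.consSum φ₁)) :
    invM f₂ lam₂ φ₂ Y N₂ ε₂ ≤ ENNReal.ofReal (Real.exp c) * invM f₁ lam₁ φ₁ Y N₁ ε₁ := by
  have he0 : ENNReal.ofReal (Real.exp c) ≠ 0 := by simp [Real.exp_pos c]
  simp only [invM, ENNReal.mul_iInf_of_ne he0 ENNReal.ofReal_ne_top]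
  refine le_iInf₂ fun Γ ⟨hcov, hΓ⟩ => ?_
  have hTΓ : ECovers (T '' Γ) Y ε₂ ∧ ∀ D ∈ T '' Γ, N₂ ≤ D.len := by
    refine ⟨fun x hx => ?_, ?_⟩
    · obtain ⟨C, hC, hxC⟩ := mem_iUnion₂.1 (hcov hx)
      exact mem_biUnion (mem_image_of_mem T hC) (hsh C hxC)
    · rintro _ ⟨C, hC, rfl⟩
      exact hlen C (hΓ C hC)
  calc _ ≤ ∑' D : ↥(T '' Γ), ENNReal.ofReal
          (Real.exp (-lam₂ * (D.1.len : ℝ) + D.1.consSum φ₂)) := iInf₂_le (T '' Γ) hTΓ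
    _ ≤ ∑' C : ↥Γ, ENNReal.ofReal
          (Real.exp (-lam₂ * ((T C.1).len : ℝ) + (T C.1).consSum φ₂)) :=
        ENNReal.tsum_le_tsum_comp_of_surjective imageFactorization_surjective _
    _ ≤ ∑' C : ↥Γ, ENNReal.ofReal (Real.exp c) *
          ENNReal.ofReal (Real.exp (-lam₁ * (C.1.len : ℝ) + C.1.consSum φ₁)) := by
        refine ENNReal.tsum_le_tsum fun C => ?_
        rw [← ENNReal.ofReal_mul (Real.exp_pos c).le, ← Real.exp_add]
        exact ENNReal.ofReal_le_ofReal (Real.exp_le_exp.2 (hw C))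
    _ = _ := ENNReal.tsum_mul_left

theorem invMLim_eq_zero_of_transfer (T : Prehistory f₁ → Prehistory f₂) (c : ℝ)
    (hsh : ∀ C, C.shadow ε₁ ⊆ (T C).shadow ε₂)
    (hlen : ∀ N₂, ∃ N₁, ∀ C : Prehistory f₁, N₁ ≤ C.len → N₂ ≤ (T C).len)
    (hw : ∀ C, -lam₂ * ((T C).len : ℝ) + (T C).consSum φ₂ ≤
      c + (-lam₁ * (C.len : ℝ) + C.consSum φ₁))
    (h : invMLim f₁ lam₁ φ₁ Y ε₁ = 0) : invMLim f₂ lam₂ φ₂ Y ε₂ = 0 := by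
  rw [invMLim, ENNReal.iSup_eq_zero] at h ⊢
  intro N₂
  obtain ⟨N₁, hN⟩ := hlen N₂
  refine le_antisymm ?_ zero_le
  simpa [h N₁] using invM_le_mul_invM_s14 (Y := Y) T c hsh hN hw

theorem invPressEps_le_coe_mul {c : ℝ} (hc : 0 < c)
    (h : ∀ μ, invMLim f₁ μ φ₁ Y ε₁ = 0 → invMLim f₂ (c * μ) φ₂ Y ε₂ = 0) :
    invPressEps f₂ φ₂ Y ε₂ ≤ c * invPressEps f₁ φ₁ Y ε₁ := by
  rw [← EReal.div_le_iff_le_mul (EReal.coe_pos.2 hc) (EReal.coe_ne_top c)]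
  refine le_sInf ?_
  rintro _ ⟨μ, rfl, hμ⟩
  rw [EReal.div_le_iff_le_mul (EReal.coe_pos.2 hc) (EReal.coe_ne_top c)]
  exact sInf_le ⟨c * μ, EReal.coe_mul c μ, h μ hμ⟩

theorem coe_mul_invPressEps_le {c : ℝ} (hc : 0 < c)
    (h : ∀ μ, invMLim f₂ (c * μ) φ₂ Y ε₂ = 0 → invMLim f₁ μ φ₁ Y ε₁ = 0) :
    c * invPressEps f₁ φ₁ Y ε₁ ≤ invPressEps f₂ φ₂ Y ε₂ := by
  refine le_sInf ?_
  rintro _ ⟨lam, rfl, hlam⟩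
  rw [mul_comm, ← EReal.le_div_iff_mul_le (EReal.coe_pos.2 hc) (EReal.coe_ne_top c),
    ← EReal.coe_div]
  exact sInf_le ⟨lam / c, rfl, h _ (by rwa [mul_div_cancel₀ lam hc.ne'])⟩

end Transfer

section Iterate

variable {f : X → X} {ψ : X → ℝ} {M : ℝ} {Y : Set X} {n : ℕ}

theorem exists_pos_forall_dist_iterate_lt [CompactSpace X] (hf : Continuous f) (n : ℕ)
    {ε : ℝ} (hε : 0 < ε) :
    ∃ δ > 0, ∀ j < n, ∀ a b : X, dist a b < δ → dist (f^[j] a) (f^[j] b) < ε := by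
  have hu : UniformContinuous fun x (j : Fin n) => f^[j] x :=
    CompactSpace.uniformContinuous_of_continuous (continuous_pi fun j => hf.iterate j)
  obtain ⟨δ, hδ, hδε⟩ := Metric.uniformContinuous_iff.1 hu ε hε
  exact ⟨δ, hδ, fun j hj a b hab => (dist_le_pi_dist _ _ (⟨j, hj⟩ : Fin n)).trans_lt (hδε hab)⟩

theorem invMLim_iterate_birkhoff_eq_zero (hn : 0 < n) (hM : ∀ x, |ψ x| ≤ M) {ε μ : ℝ}
    (h : invMLim f μ ψ Y ε = 0) : invMLim (f^[n]) (n * μ) (birkhoff f ψ n) Y ε = 0 := by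
  refine invMLim_eq_zero_of_transfer (fun C => C.sample n) ((2 * n + 1) * M + |μ| * n)
    (fun C => C.shadow_subset_shadow_sample n ε)
    (fun N => ⟨n * N, fun C hC => (Nat.le_div_iff_mul_le hn).2 (by linarith)⟩) (fun C => ?_) h
  have hsum := C.consSum_sample_le hn hM
  have hgap : (C.len : ℝ) - n * (C.len / n : ℕ) = (C.len % n : ℕ) := by
    rw [sub_eq_iff_eq_add]
    exact_mod_cast (Nat.mod_add_div C.len n).symm
  have hmod : ((C.len % n : ℕ) : ℝ) ≤ n := by exact_mod_cast (Nat.mod_lt _ hn).le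
  have hμ : μ * (C.len - n * (C.len / n : ℕ)) ≤ |μ| * n := by
    rw [hgap]
    exact (mul_le_mul_of_nonneg_right (le_abs_self μ) (Nat.cast_nonneg _)).trans
      (mul_le_mul_of_nonneg_left hmod (abs_nonneg μ))
  simp only [Prehistory.sample] at hsum ⊢
  linarith

theorem invMLim_eq_zero_of_iterate_birkhoff (hn : 0 < n) (hM : ∀ x, |ψ x| ≤ M) {δ ε μ : ℝ}
    (hδ : ∀ j < n, ∀ a b : X, dist a b < δ → dist (f^[j] a) (f^[j] b) < ε)
    (h : invMLim (f^[n]) (n * μ) (birkhoff f ψ n) Y δ = 0) : invMLim f μ ψ Y ε = 0 := by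
  refine invMLim_eq_zero_of_transfer (fun C => C.expand hn) ((n + 1) * M)
    (fun C => C.shadow_subset_shadow_expand hn hδ)
    (fun N => ⟨N, fun C hC => hC.trans (Nat.le_mul_of_pos_left _ hn)⟩) (fun C => ?_) h
  have hdiff := abs_le.1 (C.abs_consSum_expand_sub_le hn hM)
  simp only [Prehistory.expand, Nat.cast_mul] at hdiff ⊢
  linarith

theorem invPress_iterate_birkhoff [CompactSpace X] (hf : Continuous f) (hM : ∀ x, |ψ x| ≤ M)
    (hn : 0 < n) (Y : Set X) : invPress (f^[n]) (birkhoff f ψ n) Y = n * invPress f ψ Y := by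
  have hnR : (0 : ℝ) < n := Nat.cast_pos.2 hn
  have hnE : (0 : EReal) < n := EReal.coe_pos.2 hnR
  apply le_antisymm
  · refine iSup₂_le fun ε hε => ?_
    exact (invPressEps_le_coe_mul hnR fun μ => invMLim_iterate_birkhoff_eq_zero hn hM).trans
      (mul_le_mul_of_nonneg_left (le_iSup₂ (f := fun ε (_ : 0 < ε) => invPressEps f ψ Y ε) ε hε)
        hnE.le)
  · rw [mul_comm, ← EReal.le_div_iff_mul_le hnE (EReal.coe_ne_top _)]
    refine iSup₂_le fun ε hε => ?_
    obtain ⟨δ, hδ, hδε⟩ := exists_pos_forall_dist_iterate_lt hf n hε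
    rw [EReal.le_div_iff_mul_le hnE (EReal.coe_ne_top _), mul_comm]
    exact (coe_mul_invPressEps_le hnR fun μ => invMLim_eq_zero_of_iterate_birkhoff hn hM hδε).trans
      (le_iSup₂ (f := fun δ (_ : 0 < δ) => invPressEps (f^[n]) (birkhoff f ψ n) Y δ) δ hδ)

end Iterate

theorem stmt14_general [CompactSpace X] (f : X → X) (hf : Continuous f)
    (φ : X → ℝ) (hφ : Continuous φ)
    (t : ℝ) (n : ℕ) (hn : 1 ≤ n) :
    invPress (f^[n]) (fun x => t * birkhoff f φ n x) Set.univ =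
      ((n : ℝ) : EReal) * invPress f (fun x => t * φ x) Set.univ := by
  obtain ⟨M, hM⟩ := (isCompact_range (hφ.const_mul t).abs).bddAbove
  have hbirkhoff : (fun x => t * birkhoff f φ n x) = birkhoff f (fun x => t * φ x) n :=
    funext fun x => Finset.mul_sum _ _ _
  rw [hbirkhoff]
  exact invPress_iterate_birkhoff hf (fun x => hM ⟨x, rfl⟩) hn Set.univ

theorem stmt14 [CompactSpace X] (f : X → X) (hf : Continuous f) (hfs : Surjective f)
    (φ : X → ℝ) (hφ : Continuous φ) (hneg : ∀ x : X, φ x < 0)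
    (t : ℝ) (n : ℕ) (hn : 1 ≤ n) :
    invPress (f^[n]) (fun x => t * birkhoff f φ n x) Set.univ =
      ((n : ℝ) : EReal) * invPress f (fun x => t * φ x) Set.univ :=
  stmt14_general f hf φ hφ t n hn
end
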